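/- arXiv:1411.1381 — 5 statements merged into one kernel-verified Lean document; each statement's English description precedes it below -/
import Mathlib

section
/- For every p ≤ 1/2 and all v, w ∈ S with w ≤ v, the buyer's expected future utility is nonnegative: U(v,w,p) ≥ 0. Consequently, under the constant-price PPP scheme with per-use price 1/2, a risk-neutral buyer starting at V₀ = v keeps buying until his value hits 0, paying in expectation (1/2)·E_v[τ₀] = v(2−v)/(2δ²), and this expected payment is at least half his expected cumulative value: (1/2)·E_v[τ₀] ≥ (1/2)·C(v). -/
open MeasureTheory ProbabilityTheory

noncomputable section

/-- The driving noise: an i.i.d. sequence `ξ`, each `ξ i` uniform on `{-1, 1}`. -/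
def IsCoinSeq {Ω : Type} [MeasurableSpace Ω] (P : Measure Ω) (ξ : ℕ → Ω → ℝ) : Prop :=
  (∀ i, Measurable (ξ i)) ∧
  iIndepFun ξ P ∧
  ∀ i, Measure.map (ξ i) P
      = (1 / 2 : ENNReal) • Measure.dirac (1 : ℝ) + (1 / 2 : ENNReal) • Measure.dirac (-1 : ℝ)

/-- The state space `S = {0, δ, 2δ, …, 1}` with `δ = 1/n`. -/
def stateSpace (n : ℕ) : Set ℝ := {x | ∃ k : ℕ, k ≤ n ∧ x = (k : ℝ) / n}

/-- The value chain of the random-walk model started at `v`, driven by the noise `ξ`: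
absorption at `0`, reflection (deterministic move to `1 - δ`) at `1`, and a `± δ` step
(according to the coin `ξ t`) from any other state. -/
def walk {Ω : Type} (δ : ℝ) (ξ : ℕ → Ω → ℝ) (v : ℝ) : ℕ → Ω → ℝ
  | 0 => fun _ => v
  | (t + 1) => fun ω =>
      let x := walk δ ξ v t ω
      if x = 0 then 0 else if x = 1 then 1 - δ else x + δ * ξ t ω

/-- First hitting time of level `u` (with value `0` by convention if `u` is never hit). -/
def hitTime {Ω : Type} (V : ℕ → Ω → ℝ) (u : ℝ) (ω : Ω) : ℕ := sInf {t | V t ω = u}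

/-- First hitting time of the set `{0, 1}`. -/
def hitTime01 {Ω : Type} (V : ℕ → Ω → ℝ) (ω : Ω) : ℕ := sInf {t | V t ω = 0 ∨ V t ω = 1}

set_option linter.unusedSectionVars false
namespace PPPAux

open MeasureTheory ProbabilityTheory

variable {Ω : Type}

/-- Hitting clock truncated at `t`: equals `min t τ_w` when `w` is eventually hit,
and `t` otherwise. -/
def clk (V : ℕ → Ω → ℝ) (w : ℝ) : ℕ → Ω → ℕ
  | 0 => fun _ => 0
  | (t+1) => fun ω => if V (clk V w t ω) ω = w then clk V w t ω else clk V w t ω + 1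

variable {V : ℕ → Ω → ℝ} {w : ℝ} {ω : Ω}

lemma clk_le : ∀ t, clk V w t ω ≤ t
  | 0 => le_rfl
  | (t+1) => by
      simp only [clk]
      split
      · exact (clk_le t).trans (Nat.le_succ t)
      · exact Nat.succ_le_succ (clk_le t)

lemma clk_eq_of_ne : ∀ t, V (clk V w t ω) ω ≠ w → clk V w t ω = t
  | 0, _ => rfl
  | (t+1), h => by
      have h2 : ¬ (V (clk V w t ω) ω = w) := by
        intro hc
        apply h
        simp only [clk, if_pos hc]
        exact hc
      simp only [clk, if_neg h2]
      exact congrArg Nat.succ (clk_eq_of_ne t h2)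

lemma clk_succ_eq {t : ℕ} (h : clk V w (t+1) ω = t+1) : clk V w t ω = t ∧ V t ω ≠ w := by
  by_cases hc : V (clk V w t ω) ω = w
  · exfalso
    have : clk V w (t+1) ω = clk V w t ω := by simp only [clk, if_pos hc]
    have := this ▸ h
    exact absurd (this ▸ clk_le t) (by omega)
  · have h1 : clk V w (t+1) ω = clk V w t ω + 1 := by simp only [clk, if_neg hc]
    have h2 : clk V w t ω = t := by omega
    exact ⟨h2, h2 ▸ hc⟩

lemma ne_of_clk_eq : ∀ t, clk V w t ω = t → ∀ s, s < t → V s ω ≠ w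
  | 0, _, s, hs => absurd hs (Nat.not_lt_zero s)
  | (t+1), h, s, hs => by
      obtain ⟨h1, h2⟩ := clk_succ_eq h
      rcases Nat.lt_succ_iff_lt_or_eq.mp hs with hs' | hs'
      · exact ne_of_clk_eq t h1 s hs'
      · exact hs' ▸ h2

lemma clk_eq_of_forall : ∀ t, (∀ s, s < t → V s ω ≠ w) → clk V w t ω = t
  | 0, _ => rfl
  | (t+1), h => by
      have h1 : clk V w t ω = t := clk_eq_of_forall t (fun s hs => h s (hs.trans (Nat.lt_succ_self t)))
      have h2 : ¬ (V (clk V w t ω) ω = w) := by rw [h1]; exact h t (Nat.lt_succ_self t)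
      show (if V (clk V w t ω) ω = w then clk V w t ω else clk V w t ω + 1) = t + 1
      rw [if_neg h2, h1]

lemma clk_eq_min {N : ℕ} (hN : V N ω = w) (hmin : ∀ s, s < N → V s ω ≠ w) :
    ∀ t, clk V w t ω = min t N
  | 0 => by simp [clk]
  | (t+1) => by
      have ih := clk_eq_min hN hmin t
      rcases lt_or_ge t N with h | h
      · have h2 : ¬ (V (clk V w t ω) ω = w) := by
          rw [ih, min_eq_left h.le]
          exact hmin t h
        show (if V (clk V w t ω) ω = w then clk V w t ω else clk V w t ω + 1) = min (t+1) N
        rw [if_neg h2, ih, min_eq_left h.le, min_eq_left (by omega : t + 1 ≤ N)]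
      · have h2 : V (clk V w t ω) ω = w := by rw [ih, min_eq_right h]; exact hN
        show (if V (clk V w t ω) ω = w then clk V w t ω else clk V w t ω + 1) = min (t+1) N
        rw [if_pos h2, ih, min_eq_right h, min_eq_right (by omega : N ≤ t + 1)]

lemma clk_mono {t : ℕ} : clk V w t ω ≤ clk V w (t+1) ω := by
  simp only [clk]; split <;> omega


/-! ### Measurability -/

lemma measurable_nat_comp [MeasurableSpace Ω] {F : ℕ → Ω → ℝ} (hF : ∀ k, Measurable (F k)) {N : Ω → ℕ}
    (hN : Measurable N) : Measurable fun ω => F (N ω) ω := by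
  have h : Measurable fun p : Ω × ℕ => F p.2 p.1 :=
    measurable_from_prod_countable_left fun k => hF k
  exact h.comp (measurable_id.prodMk hN)

lemma measurable_walk [MeasurableSpace Ω] {ξ : ℕ → Ω → ℝ} (hξ : ∀ i, Measurable (ξ i)) (δ v : ℝ) :
    ∀ t, Measurable (walk δ ξ v t)
  | 0 => measurable_const
  | (t+1) => by
      have ih := measurable_walk hξ δ v t
      show Measurable fun ω => if walk δ ξ v t ω = 0 then 0
        else if walk δ ξ v t ω = 1 then 1 - δ else walk δ ξ v t ω + δ * ξ t ω
      refine Measurable.ite (ih (measurableSet_singleton 0)) measurable_const ?_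
      exact Measurable.ite (ih (measurableSet_singleton 1)) measurable_const
        (ih.add ((hξ t).const_mul δ))

lemma measurable_clk [MeasurableSpace Ω] {V : ℕ → Ω → ℝ} (hV : ∀ t, Measurable (V t)) (w : ℝ) :
    ∀ t, Measurable (clk V w t)
  | 0 => measurable_const
  | (t+1) => by
      have ih := measurable_clk hV w t
      have hVc : Measurable fun ω => V (clk V w t ω) ω := measurable_nat_comp hV ih
      show Measurable fun ω =>
        if V (clk V w t ω) ω = w then clk V w t ω else clk V w t ω + 1
      exact Measurable.ite (hVc (measurableSet_singleton w)) ih (ih.add measurable_const)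

lemma measurable_hitTime [MeasurableSpace Ω] {V : ℕ → Ω → ℝ} (hV : ∀ t, Measurable (V t)) (w : ℝ) :
    Measurable fun ω => hitTime V w ω := by
  apply measurable_to_countable'
  intro k
  have hset : (fun ω => hitTime V w ω) ⁻¹' {k} =
      ((V k ⁻¹' {w}) ∩ ⋂ s ∈ Finset.range k, (V s ⁻¹' {w})ᶜ) ∪
        ({ω : Ω | k = 0} ∩ ⋂ s, (V s ⁻¹' {w})ᶜ) := by
    ext ω
    simp only [hitTime, Set.mem_preimage, Set.mem_singleton_iff, Set.mem_union, Set.mem_inter_iff,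
      Set.mem_iInter, Finset.mem_range, Set.mem_compl_iff, Set.mem_setOf_eq]
    constructor
    · intro h
      by_cases hne : ∃ s, V s ω = w
      · left
        have hmem : hitTime V w ω ∈ {t | V t ω = w} := Nat.sInf_mem hne
        refine ⟨h ▸ hmem, fun s hs => ?_⟩
        have : s < sInf {t | V t ω = w} := h ▸ hs
        exact Nat.notMem_of_lt_sInf this
      · right
        push_neg at hne
        have he : {t | V t ω = w} = ∅ := by ext s; simp [hne s]
        rw [he, Nat.sInf_empty] at h
        exact ⟨h.symm, hne⟩
    · rintro (⟨h1, h2⟩ | ⟨h1, h2⟩)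
      · apply le_antisymm
        · exact Nat.sInf_le h1
        · by_contra hlt
          push_neg at hlt
          have hmem : sInf {t | V t ω = w} ∈ {t | V t ω = w} :=
            Nat.sInf_mem (⟨k, h1⟩ : {t | V t ω = w}.Nonempty)
          exact h2 _ hlt hmem
      · have he : {t | V t ω = w} = ∅ := by ext s; simp [h2 s]
        rw [he, Nat.sInf_empty, h1]
  rw [hset]
  refine MeasurableSet.union ?_ ?_
  · exact ((hV k (measurableSet_singleton w)).inter
      (MeasurableSet.biInter (Set.to_countable _)
        (fun s _ => (hV s (measurableSet_singleton w)).compl)))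
  · refine MeasurableSet.inter ?_ (MeasurableSet.iInter fun s => (hV s (measurableSet_singleton w)).compl)
    by_cases hk : k = 0 <;> simp [hk]

lemma measurable_sum_range [MeasurableSpace Ω] {F : ℕ → Ω → ℝ} (hF : ∀ k, Measurable (F k)) {N : Ω → ℕ}
    (hN : Measurable N) : Measurable fun ω => ∑ s ∈ Finset.range (N ω), F s ω := by
  exact measurable_nat_comp (fun k => by
    exact Finset.measurable_sum (Finset.range k) (fun s _ => hF s)) hN

/-! ### State space facts -/

section StateFacts

lemma npos {n : ℕ} (hn : 2 ≤ n) : (0:ℝ) < n := by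
  have : (2:ℝ) ≤ n := by exact_mod_cast hn
  linarith

variable {n : ℕ} {δ : ℝ}

lemma δpos (hn : 2 ≤ n) (hδ : δ = 1 / n) : 0 < δ := by
  rw [hδ]; exact one_div_pos.mpr (npos hn)

lemma δle (hn : 2 ≤ n) (hδ : δ = 1 / n) : δ ≤ 1/2 := by
  rw [hδ]
  have h2 : (2:ℝ) ≤ n := by exact_mod_cast hn
  have := npos hn
  rw [div_le_div_iff₀ this (by norm_num)]
  linarith

lemma mem_nonneg (hn : 2 ≤ n) (hδ : δ = 1 / n) {x : ℝ} (hx : x ∈ stateSpace n) : 0 ≤ x := by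
  obtain ⟨k, _, rfl⟩ := hx
  positivity

lemma mem_le_one (hn : 2 ≤ n) (hδ : δ = 1 / n) {x : ℝ} (hx : x ∈ stateSpace n) : x ≤ 1 := by
  obtain ⟨k, hk, rfl⟩ := hx
  rw [div_le_one (npos hn)]
  exact_mod_cast hk

lemma zero_mem (hn : 2 ≤ n) (hδ : δ = 1 / n) : (0:ℝ) ∈ stateSpace n := ⟨0, by omega, by simp⟩

lemma add_mem (hn : 2 ≤ n) (hδ : δ = 1 / n) {x : ℝ} (hx : x ∈ stateSpace n) (hx1 : x ≠ 1) : x + δ ∈ stateSpace n := by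
  obtain ⟨k, hk, rfl⟩ := hx
  have hne := npos hn
  have hkn : k ≠ n := by
    rintro rfl
    exact hx1 (div_self hne.ne')
  refine ⟨k + 1, by omega, ?_⟩
  rw [hδ]
  push_cast
  field_simp

lemma sub_mem (hn : 2 ≤ n) (hδ : δ = 1 / n) {x : ℝ} (hx : x ∈ stateSpace n) (hx0 : x ≠ 0) : x - δ ∈ stateSpace n := by
  obtain ⟨k, hk, rfl⟩ := hx
  have hne := npos hn
  have hk0 : k ≠ 0 := by
    rintro rfl
    exact hx0 (by simp)
  refine ⟨k - 1, by omega, ?_⟩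
  rw [hδ]
  have : ((k - 1 : ℕ) : ℝ) = (k : ℝ) - 1 := by
    have : (1:ℕ) ≤ k := by omega
    push_cast [this]
    ring
  rw [this]
  field_simp

lemma one_sub_mem (hn : 2 ≤ n) (hδ : δ = 1 / n) : (1:ℝ) - δ ∈ stateSpace n := by
  have h1 : (1:ℝ) ∈ stateSpace n := ⟨n, le_rfl, (div_self (npos hn).ne').symm⟩
  have := sub_mem hn hδ h1 one_ne_zero
  exact this

lemma lattice_gap (hn : 2 ≤ n) (hδ : δ = 1 / n) {x y : ℝ} (hx : x ∈ stateSpace n) (hy : y ∈ stateSpace n) (h : y < x) :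
    y + δ ≤ x := by
  obtain ⟨k, _, rfl⟩ := hx
  obtain ⟨j, _, rfl⟩ := hy
  have hne := npos hn
  have hjk : (j:ℝ) < k := by
    rwa [div_lt_div_iff₀ hne hne, mul_lt_mul_iff_left₀ hne] at h
  have hjk' : j + 1 ≤ k := by exact_mod_cast hjk
  rw [hδ]
  rw [div_add_div _ _ hne.ne' hne.ne', div_le_div_iff₀ (by positivity) hne]
  have : ((j:ℝ) + 1) ≤ k := by exact_mod_cast hjk'
  nlinarith

end StateFacts

/-! ### Walk invariants -/

section Invariants

variable {ξ : ℕ → Ω → ℝ} {n : ℕ} {δ v w : ℝ} {ω : Ω}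

lemma walk_mem (hn : 2 ≤ n) (hδ : δ = 1 / n) (hv : v ∈ stateSpace n)
    (hG : ∀ i, ξ i ω = 1 ∨ ξ i ω = -1) : ∀ t, walk δ ξ v t ω ∈ stateSpace n
  | 0 => hv
  | (t+1) => by
      have ih := walk_mem hn hδ hv hG t
      show (if walk δ ξ v t ω = 0 then 0 else if walk δ ξ v t ω = 1 then 1 - δ
        else walk δ ξ v t ω + δ * ξ t ω) ∈ stateSpace n
      split
      · exact zero_mem hn hδ
      · split
        · exact one_sub_mem hn hδ
        · rcases hG t with h | h <;> rw [h]
          · simpa using add_mem hn hδ ih (by assumption)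
          · have := sub_mem hn hδ ih (by assumption)
            simpa [sub_eq_add_neg] using this

lemma walk_gt (hn : 2 ≤ n) (hδ : δ = 1 / n) (hv : v ∈ stateSpace n) (hw : w ∈ stateSpace n)
    (hwv : w ≤ v) (hG : ∀ i, ξ i ω = 1 ∨ ξ i ω = -1) :
    ∀ t, (∀ s, s ≤ t → walk δ ξ v s ω ≠ w) → w < walk δ ξ v t ω
  | 0, h => lt_of_le_of_ne hwv (Ne.symm (h 0 le_rfl))
  | (t+1), h => by
      have hA : ∀ s, s ≤ t → walk δ ξ v s ω ≠ w := fun s hs => h s (hs.trans (Nat.le_succ t))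
      have ih : w < walk δ ξ v t ω := walk_gt hn hδ hv hw hwv hG t hA
      have hmem := walk_mem hn hδ hv hG t
      have hmem1 := walk_mem hn hδ hv hG (t+1)
      have hne : walk δ ξ v (t+1) ω ≠ w := h (t+1) le_rfl
      have hgap : w + δ ≤ walk δ ξ v t ω := lattice_gap hn hδ hmem hw ih
      have hw0 : 0 ≤ w := mem_nonneg hn hδ hw
      have hδ0 : 0 < δ := δpos hn hδ
      refine lt_of_le_of_ne ?_ (Ne.symm hne)
      show w ≤ walk δ ξ v (t+1) ω
      have hx0 : walk δ ξ v t ω ≠ 0 := by intro h0; rw [h0] at ih; linarith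
      show w ≤ (if walk δ ξ v t ω = 0 then 0 else if walk δ ξ v t ω = 1 then 1 - δ
        else walk δ ξ v t ω + δ * ξ t ω)
      rw [if_neg hx0]
      split
      · rename_i h1
        rw [h1] at hgap
        linarith
      · rcases hG t with hc | hc <;> rw [hc] <;> nlinarith

end Invariants

/-! ### Congruence and factorization through finitely many coins -/

section Congr

variable {ξ : ℕ → Ω → ℝ} {δ v w : ℝ} {ω : Ω} {f : ℝ → ℝ}

lemma walk_congr {Ω' : Type} {ξ' : ℕ → Ω' → ℝ} {ω' : Ω'} {t : ℕ}
    (h : ∀ i, i < t → ξ i ω = ξ' i ω') : ∀ s, s ≤ t → walk δ ξ v s ω = walk δ ξ' v s ω'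
  | 0, _ => rfl
  | (s+1), hs => by
      have ih := walk_congr h s (by omega)
      show (if walk δ ξ v s ω = 0 then 0 else if walk δ ξ v s ω = 1 then 1 - δ
        else walk δ ξ v s ω + δ * ξ s ω) =
        (if walk δ ξ' v s ω' = 0 then 0 else if walk δ ξ' v s ω' = 1 then 1 - δ
        else walk δ ξ' v s ω' + δ * ξ' s ω')
      rw [← ih, ← h s (by omega)]

lemma clk_congr {Ω' : Type} {V : ℕ → Ω → ℝ} {V' : ℕ → Ω' → ℝ} {ω' : Ω'} {t : ℕ}
    (h : ∀ s, s ≤ t → V s ω = V' s ω') : ∀ u, u ≤ t → clk V w u ω = clk V' w u ω'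
  | 0, _ => rfl
  | (u+1), hu => by
      have ih := clk_congr h u (by omega)
      show (if V (clk V w u ω) ω = w then clk V w u ω else clk V w u ω + 1) =
        (if V' (clk V' w u ω') ω' = w then clk V' w u ω' else clk V' w u ω' + 1)
      rw [← ih, ← h _ ((clk_le u).trans (by omega))]

/-- "One-step discrete derivative" random variable appearing in the martingale decomposition. -/
def Zfun (ξ : ℕ → Ω → ℝ) (δ v w : ℝ) (f : ℝ → ℝ) (t : ℕ) (ω : Ω) : ℝ :=
  if walk δ ξ v (clk (walk δ ξ v) w t ω) ω = w ∨ walk δ ξ v t ω = 1 then 0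
  else (f (walk δ ξ v t ω + δ) - f (walk δ ξ v t ω - δ)) / 2

lemma Zfun_congr {Ω' : Type} {ξ' : ℕ → Ω' → ℝ} {ω' : Ω'} {t : ℕ}
    (h : ∀ i, i < t → ξ i ω = ξ' i ω') :
    Zfun ξ δ v w f t ω = Zfun ξ' δ v w f t ω' := by
  have hwalk : ∀ s, s ≤ t → walk δ ξ v s ω = walk δ ξ' v s ω' := walk_congr h
  have hclk : clk (walk δ ξ v) w t ω = clk (walk δ ξ' v) w t ω' := clk_congr hwalk t le_rfl
  unfold Zfun
  rw [hclk, hwalk t le_rfl, hwalk _ ((clk_le t).trans le_rfl)]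

lemma measurable_Zfun [MeasurableSpace Ω] (hξ : ∀ i, Measurable (ξ i)) (hf : Measurable f) (t : ℕ) :
    Measurable (Zfun ξ δ v w f t) := by
  have hV := measurable_walk hξ δ v
  have hc := measurable_clk hV w t
  have hVc : Measurable fun ω => walk δ ξ v (clk (walk δ ξ v) w t ω) ω :=
    measurable_nat_comp hV hc
  unfold Zfun
  refine Measurable.ite ?_ measurable_const ?_
  · exact MeasurableSet.union (hVc (measurableSet_singleton w))
      ((hV t) (measurableSet_singleton 1))
  · exact (((hf.comp ((hV t).add_const δ)).sub
      (hf.comp ((hV t).sub_const δ))).div_const 2)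

end Congr

section Indep

variable [MeasurableSpace Ω] {ξ : ℕ → Ω → ℝ} {δ v w : ℝ} {f : ℝ → ℝ}

lemma indep_Z_coin (P : Measure Ω) [IsProbabilityMeasure P]
    (hmeas : ∀ i, Measurable (ξ i))
    (hindep : iIndepFun ξ P)
    (hf : Measurable f) (t : ℕ) :
    IndepFun (Zfun ξ δ v w f t) (ξ t) P := by
  classical
  set S : Finset ℕ := Finset.range t with hS
  set T : Finset ℕ := {t} with hT
  have hd : Disjoint S T := by
    simp [hS, hT, Finset.disjoint_singleton_right]
  have base := hindep.indepFun_finset S T hd hmeas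
  -- pad a tuple indexed by `S` to a full coin sequence
  let pad : ((i : S) → ℝ) → (ℕ → ℝ) := fun a i => if h : i ∈ S then a ⟨i, h⟩ else 0
  have hpad : Measurable pad := by
    refine measurable_pi_lambda _ (fun i => ?_)
    by_cases h : i ∈ S
    · simpa [pad, h] using measurable_pi_apply (⟨i, h⟩ : S)
    · simpa [pad, h] using measurable_const
  let Φ : (ℕ → ℝ) → ℝ := Zfun (fun i (c : ℕ → ℝ) => c i) δ v w f t
  have hΦ : Measurable Φ := measurable_Zfun (fun i => measurable_pi_apply i) hf t
  let ev : ((i : T) → ℝ) → ℝ := fun a => a ⟨t, by simp [hT]⟩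
  have hev : Measurable ev := measurable_pi_apply _
  have hcomp := base.comp ((hΦ.comp hpad)) hev
  have h1 : ((Φ ∘ pad) ∘ fun a (i : S) => ξ i a) = Zfun ξ δ v w f t := by
    funext ω
    show Φ (pad fun i : S => ξ i ω) = Zfun ξ δ v w f t ω
    refine (Zfun_congr fun i hi => ?_).symm
    show ξ i ω = pad (fun i : S => ξ i ω) i
    simp only [pad]
    rw [dif_pos (by simp [hS, hi])]
  have h2 : (ev ∘ fun a (i : T) => ξ i a) = ξ t := by
    funext ω; rfl
  rw [← h1, ← h2]
  exact hcomp

end Indep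

/-! ### Coin facts -/

section Coin

variable [MeasurableSpace Ω]

lemma integrable_id_dirac (a : ℝ) : Integrable (fun x : ℝ => x) (Measure.dirac a) := by
  refine ⟨stronglyMeasurable_id.aestronglyMeasurable, ?_⟩
  show (∫⁻ x, ‖x‖₊ ∂(Measure.dirac a)) < ⊤
  rw [lintegral_dirac]
  exact ENNReal.coe_lt_top

variable {P : Measure Ω} [IsProbabilityMeasure P] {ξi : Ω → ℝ}

lemma ae_coin (hm : Measurable ξi)
    (hlaw : Measure.map ξi P
      = (1 / 2 : ENNReal) • Measure.dirac (1 : ℝ) + (1 / 2 : ENNReal) • Measure.dirac (-1 : ℝ)) :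
    ∀ᵐ ω ∂P, ξi ω = 1 ∨ ξi ω = -1 := by
  have hset : MeasurableSet ({1, -1} : Set ℝ) :=
    (measurableSet_singleton (-1)).insert 1
  have hnull : P (ξi ⁻¹' ({1, -1} : Set ℝ)ᶜ) = 0 := by
    have hmap := Measure.map_apply (μ := P) hm hset.compl
    rw [hlaw] at hmap
    rw [← hmap]
    have h1 : (Measure.dirac (1:ℝ)) ({1, -1} : Set ℝ)ᶜ = 0 := by
      rw [Measure.dirac_apply' _ hset.compl]
      simp
    have h2 : (Measure.dirac (-1:ℝ)) ({1, -1} : Set ℝ)ᶜ = 0 := by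
      rw [Measure.dirac_apply' _ hset.compl]
      simp
    simp [Measure.add_apply, Measure.smul_apply, h1, h2]
  rw [ae_iff]
  have hseteq : {ω | ¬(ξi ω = 1 ∨ ξi ω = -1)} = ξi ⁻¹' ({1, -1} : Set ℝ)ᶜ := by
    ext ω
    simp only [Set.mem_setOf_eq, Set.mem_preimage, Set.mem_compl_iff, Set.mem_insert_iff,
      Set.mem_singleton_iff]
  rw [hseteq]
  exact hnull

lemma integrable_coin (hm : Measurable ξi)
    (hlaw : Measure.map ξi P
      = (1 / 2 : ENNReal) • Measure.dirac (1 : ℝ) + (1 / 2 : ENNReal) • Measure.dirac (-1 : ℝ)) :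
    Integrable ξi P := by
  refine Integrable.mono' (integrable_const 1) hm.aestronglyMeasurable ?_
  filter_upwards [ae_coin hm hlaw] with ω h
  rcases h with h | h <;> rw [h] <;> norm_num

lemma integral_coin (hm : Measurable ξi)
    (hlaw : Measure.map ξi P
      = (1 / 2 : ENNReal) • Measure.dirac (1 : ℝ) + (1 / 2 : ENNReal) • Measure.dirac (-1 : ℝ)) :
    ∫ ω, ξi ω ∂P = 0 := by
  have h1 : ∫ ω, ξi ω ∂P = ∫ x, x ∂(Measure.map ξi P) :=
    (integral_map hm.aemeasurable aestronglyMeasurable_id).symm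
  rw [h1, hlaw]
  have hhalf : (1/2 : ENNReal) ≠ ⊤ := by norm_num
  rw [integral_add_measure ((integrable_id_dirac 1).smul_measure hhalf)
    ((integrable_id_dirac (-1)).smul_measure hhalf)]
  rw [integral_smul_measure, integral_smul_measure, integral_dirac, integral_dirac]
  norm_num

end Coin

/-! ### The martingale identity -/

section Mart

variable {Ω : Type} [MeasurableSpace Ω]

/-- Stopped "potential + accumulated reward" process. -/
def mart (ξ : ℕ → Ω → ℝ) (δ v w : ℝ) (f r : ℝ → ℝ) (t : ℕ) (ω : Ω) : ℝ :=
  f (walk δ ξ v (clk (walk δ ξ v) w t ω) ω) +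
    ∑ s ∈ Finset.range (clk (walk δ ξ v) w t ω), r (walk δ ξ v s ω)

variable {P : Measure Ω} [IsProbabilityMeasure P]
  {ξ : ℕ → Ω → ℝ} {n : ℕ} {δ v w : ℝ} {f r : ℝ → ℝ} {M : ℝ} {ω : Ω}

lemma mart_succ (hn : 2 ≤ n) (hδ : δ = 1 / n) (hv : v ∈ stateSpace n)
    (hw : w ∈ stateSpace n) (hwv : w ≤ v) (hG : ∀ i, ξ i ω = 1 ∨ ξ i ω = -1)
    (hf1 : f 1 = r 1 + f (1 - δ)) (hmid : ∀ x, f (x + δ) + f (x - δ) = 2 * (f x - r x))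
    (t : ℕ) :
    mart ξ δ v w f r (t+1) ω = mart ξ δ v w f r t ω + Zfun ξ δ v w f t ω * ξ t ω := by
  set V := walk δ ξ v with hV
  set c := clk V w t ω with hc
  by_cases hcw : V c ω = w
  · have hclk1 : clk V w (t+1) ω = c := by
      show (if V (clk V w t ω) ω = w then clk V w t ω else clk V w t ω + 1) = c
      rw [if_pos hcw]
    have hZ : Zfun ξ δ v w f t ω = 0 := by
      unfold Zfun
      rw [if_pos (Or.inl hcw)]
    rw [hZ, zero_mul, add_zero]
    unfold mart
    rw [hclk1]
  · have hct : c = t := clk_eq_of_ne t hcw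
    have hclk1 : clk V w (t+1) ω = t + 1 := by
      show (if V (clk V w t ω) ω = w then clk V w t ω else clk V w t ω + 1) = t + 1
      rw [if_neg hcw, ← hc, hct]
    have hA : ∀ s, s ≤ t → V s ω ≠ w := by
      intro s hs
      rcases lt_or_eq_of_le hs with hs' | hs'
      · exact ne_of_clk_eq t (hct ▸ hc.symm) s hs'
      · rw [hs']; rw [hct] at hcw; exact hcw
    have hmart1 : mart ξ δ v w f r (t+1) ω
        = f (V (t+1) ω) + (∑ s ∈ Finset.range t, r (V s ω)) + r (V t ω) := by
      unfold mart
      rw [hclk1, Finset.sum_range_succ]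
      ring
    have hmart0 : mart ξ δ v w f r t ω = f (V t ω) + ∑ s ∈ Finset.range t, r (V s ω) := by
      unfold mart
      rw [← hc, hct]
    rw [hmart1, hmart0]
    by_cases h1 : V t ω = 1
    · have hZ : Zfun ξ δ v w f t ω = 0 := by
        unfold Zfun
        rw [if_pos (Or.inr h1)]
      have hstep : V (t+1) ω = 1 - δ := by
        show (if V t ω = 0 then 0 else if V t ω = 1 then 1 - δ else V t ω + δ * ξ t ω) = 1 - δ
        rw [h1]
        norm_num
      rw [hZ, hstep, h1, hf1]
      ring
    · have hgt : w < V t ω := walk_gt hn hδ hv hw hwv hG t hA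
      have h0 : V t ω ≠ 0 := by
        have := mem_nonneg hn hδ hw
        intro hz; rw [hz] at hgt; linarith
      have hstep : V (t+1) ω = V t ω + δ * ξ t ω := by
        show (if V t ω = 0 then 0 else if V t ω = 1 then 1 - δ else V t ω + δ * ξ t ω)
          = V t ω + δ * ξ t ω
        rw [if_neg h0, if_neg h1]
      have hZ : Zfun ξ δ v w f t ω = (f (V t ω + δ) - f (V t ω - δ)) / 2 := by
        unfold Zfun
        rw [if_neg (by push_neg; exact ⟨hcw, h1⟩)]
      rw [hZ, hstep]
      rcases hG t with hco | hco <;> rw [hco] <;> have := hmid (V t ω) <;>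
        [skip; rw [mul_neg_one, ← sub_eq_add_neg]] <;> [rw [mul_one]; skip] <;> linarith

lemma measurable_mart (hmeas : ∀ i, Measurable (ξ i)) (hmf : Measurable f)
    (hmr : Measurable r) (t : ℕ) : Measurable (mart ξ δ v w f r t) := by
  have hV := measurable_walk hmeas δ v
  have hclk := measurable_clk hV w t
  refine Measurable.add ?_ ?_
  · exact hmf.comp (measurable_nat_comp hV hclk)
  · exact measurable_sum_range (fun k => hmr.comp (hV k)) hclk

lemma M_nonneg (hfM : ∀ x, 0 ≤ x → x ≤ 1 → |f x| ≤ M) : 0 ≤ M :=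
  le_trans (abs_nonneg _) (hfM 0 le_rfl zero_le_one)

lemma mart_bound (hn : 2 ≤ n) (hδ : δ = 1 / n) (hv : v ∈ stateSpace n)
    (hG : ∀ i, ξ i ω = 1 ∨ ξ i ω = -1)
    (hfM : ∀ x, 0 ≤ x → x ≤ 1 → |f x| ≤ M) (hrM : ∀ x, 0 ≤ x → x ≤ 1 → |r x| ≤ M)
    (t : ℕ) : |mart ξ δ v w f r t ω| ≤ M + t * M := by
  have hmem : ∀ s, walk δ ξ v s ω ∈ stateSpace n := walk_mem hn hδ hv hG
  have hfb : ∀ s, |f (walk δ ξ v s ω)| ≤ M := fun s =>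
    hfM _ (mem_nonneg hn hδ (hmem s)) (mem_le_one hn hδ (hmem s))
  have hrb : ∀ s, |r (walk δ ξ v s ω)| ≤ M := fun s =>
    hrM _ (mem_nonneg hn hδ (hmem s)) (mem_le_one hn hδ (hmem s))
  have hsum : |∑ s ∈ Finset.range (clk (walk δ ξ v) w t ω), r (walk δ ξ v s ω)|
      ≤ t * M := by
    calc |∑ s ∈ Finset.range (clk (walk δ ξ v) w t ω), r (walk δ ξ v s ω)|
        ≤ ∑ s ∈ Finset.range (clk (walk δ ξ v) w t ω), |r (walk δ ξ v s ω)| :=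
          Finset.abs_sum_le_sum_abs _ _
      _ ≤ ∑ _s ∈ Finset.range (clk (walk δ ξ v) w t ω), M :=
          Finset.sum_le_sum (fun s _ => hrb s)
      _ = (clk (walk δ ξ v) w t ω) * M := by rw [Finset.sum_const]; ring_nf; simp [nsmul_eq_mul]
      _ ≤ t * M := by
          have := M_nonneg hfM
          have hle : (clk (walk δ ξ v) w t ω : ℝ) ≤ t := by exact_mod_cast (clk_le t : clk (walk δ ξ v) w t ω ≤ t)
          nlinarith
  calc |mart ξ δ v w f r t ω| ≤ |f (walk δ ξ v (clk (walk δ ξ v) w t ω) ω)|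
        + |∑ s ∈ Finset.range (clk (walk δ ξ v) w t ω), r (walk δ ξ v s ω)| := abs_add_le _ _
    _ ≤ M + t * M := add_le_add (hfb _) hsum

lemma Z_bound (hn : 2 ≤ n) (hδ : δ = 1 / n) (hv : v ∈ stateSpace n)
    (hw : w ∈ stateSpace n) (hwv : w ≤ v) (hG : ∀ i, ξ i ω = 1 ∨ ξ i ω = -1)
    (hfM : ∀ x, 0 ≤ x → x ≤ 1 → |f x| ≤ M) (t : ℕ) :
    |Zfun ξ δ v w f t ω| ≤ M := by
  unfold Zfun
  split
  · simpa using M_nonneg hfM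
  · rename_i hcond
    push_neg at hcond
    obtain ⟨hcw, h1⟩ := hcond
    set V := walk δ ξ v with hV
    have hct : clk V w t ω = t := clk_eq_of_ne t hcw
    have hA : ∀ s, s ≤ t → V s ω ≠ w := by
      intro s hs
      rcases lt_or_eq_of_le hs with hs' | hs'
      · exact ne_of_clk_eq t hct s hs'
      · rw [hs']; rw [hct] at hcw; exact hcw
    have hgt : w < V t ω := walk_gt hn hδ hv hw hwv hG t hA
    have hmem : V t ω ∈ stateSpace n := walk_mem hn hδ hv hG t
    have hup : V t ω + δ ∈ stateSpace n := add_mem hn hδ hmem h1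
    have hδ0 : 0 < δ := δpos hn hδ
    have hw0 : 0 ≤ w := mem_nonneg hn hδ hw
    have hgap : w + δ ≤ V t ω := lattice_gap hn hδ hmem hw hgt
    have hb1 : |f (V t ω + δ)| ≤ M :=
      hfM _ (mem_nonneg hn hδ hup) (mem_le_one hn hδ hup)
    have hb2 : |f (V t ω - δ)| ≤ M := by
      refine hfM _ (by linarith) ?_
      have := mem_le_one hn hδ hmem
      linarith
    rw [abs_le] at hb1 hb2 ⊢
    constructor <;> linarith

end Mart

section MartIntegral

variable {Ω : Type} [MeasurableSpace Ω] {P : Measure Ω} [IsProbabilityMeasure P]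
  {ξ : ℕ → Ω → ℝ} {n : ℕ} {δ v w : ℝ} {f r : ℝ → ℝ} {M : ℝ}

lemma integrable_mart (hC : IsCoinSeq P ξ) (hn : 2 ≤ n) (hδ : δ = 1 / n)
    (hv : v ∈ stateSpace n) (hmf : Measurable f) (hmr : Measurable r)
    (hfM : ∀ x, 0 ≤ x → x ≤ 1 → |f x| ≤ M) (hrM : ∀ x, 0 ≤ x → x ≤ 1 → |r x| ≤ M)
    (t : ℕ) : Integrable (mart ξ δ v w f r t) P := by
  obtain ⟨hmeas, hindep, hlaw⟩ := hC
  have hGae : ∀ᵐ ω ∂P, ∀ i, ξ i ω = 1 ∨ ξ i ω = -1 :=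
    ae_all_iff.2 fun i => ae_coin (hmeas i) (hlaw i)
  refine Integrable.mono' (integrable_const (M + t * M))
    (measurable_mart hmeas hmf hmr t).aestronglyMeasurable ?_
  filter_upwards [hGae] with ω hG
  rw [Real.norm_eq_abs]
  exact mart_bound hn hδ hv hG hfM hrM t

lemma integral_mart (hC : IsCoinSeq P ξ) (hn : 2 ≤ n) (hδ : δ = 1 / n)
    (hv : v ∈ stateSpace n) (hw : w ∈ stateSpace n) (hwv : w ≤ v)
    (hmf : Measurable f) (hmr : Measurable r)
    (hf1 : f 1 = r 1 + f (1 - δ)) (hmid : ∀ x, f (x + δ) + f (x - δ) = 2 * (f x - r x))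
    (hfM : ∀ x, 0 ≤ x → x ≤ 1 → |f x| ≤ M) (hrM : ∀ x, 0 ≤ x → x ≤ 1 → |r x| ≤ M) :
    ∀ t, ∫ ω, mart ξ δ v w f r t ω ∂P = f v := by
  obtain ⟨hmeas, hindep, hlaw⟩ := hC
  have hGae : ∀ᵐ ω ∂P, ∀ i, ξ i ω = 1 ∨ ξ i ω = -1 :=
    ae_all_iff.2 fun i => ae_coin (hmeas i) (hlaw i)
  intro t
  induction t with
  | zero =>
      have : mart ξ δ v w f r 0 = fun _ => f v := by
        funext ω
        show f (walk δ ξ v (clk (walk δ ξ v) w 0 ω) ω)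
          + ∑ s ∈ Finset.range (clk (walk δ ξ v) w 0 ω), r (walk δ ξ v s ω) = f v
        have h0 : clk (walk δ ξ v) w 0 ω = 0 := rfl
        rw [h0]
        simp [walk]
      rw [this, integral_const]
      simp
  | succ t ih =>
      have hZmeas : Measurable (Zfun ξ δ v w f t) := measurable_Zfun hmeas hmf t
      have hZint : Integrable (Zfun ξ δ v w f t) P := by
        refine Integrable.mono' (integrable_const M) hZmeas.aestronglyMeasurable ?_
        filter_upwards [hGae] with ω hG
        rw [Real.norm_eq_abs]
        exact Z_bound hn hδ hv hw hwv hG hfM t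
      have hξint : Integrable (ξ t) P := integrable_coin (hmeas t) (hlaw t)
      have hZξint : Integrable (fun ω => Zfun ξ δ v w f t ω * ξ t ω) P := by
        refine Integrable.mono' (integrable_const M) (hZmeas.mul (hmeas t)).aestronglyMeasurable ?_
        filter_upwards [hGae] with ω hG
        rw [Real.norm_eq_abs, abs_mul]
        have h1 : |ξ t ω| = 1 := by rcases hG t with h | h <;> rw [h] <;> norm_num
        rw [h1, mul_one]
        exact Z_bound hn hδ hv hw hwv hG hfM t
      have hcong : ∫ ω, mart ξ δ v w f r (t+1) ω ∂P
          = ∫ ω, (mart ξ δ v w f r t ω + Zfun ξ δ v w f t ω * ξ t ω) ∂P := by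
        refine integral_congr_ae ?_
        filter_upwards [hGae] with ω hG
        exact mart_succ hn hδ hv hw hwv hG hf1 hmid t
      rw [hcong, integral_add
        (integrable_mart ⟨hmeas, hindep, hlaw⟩ hn hδ hv hmf hmr hfM hrM t) hZξint]
      have hprod : ∫ ω, Zfun ξ δ v w f t ω * ξ t ω ∂P
          = (∫ ω, Zfun ξ δ v w f t ω ∂P) * ∫ ω, ξ t ω ∂P :=
        (indep_Z_coin P hmeas hindep hmf t).integral_mul_eq_mul_integral hZint.aestronglyMeasurable hξint.aestronglyMeasurable
      rw [hprod, integral_coin (hmeas t) (hlaw t), mul_zero, add_zero, ih]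

end MartIntegral

/-! ### Almost sure hitting -/

section Hit

variable {Ω : Type} [MeasurableSpace Ω] {P : Measure Ω} [IsProbabilityMeasure P]
  {ξ : ℕ → Ω → ℝ} {n : ℕ} {δ v w : ℝ}

/-- The fundamental quadratic: expected time to hit `w`. -/
def hfun (δ w x : ℝ) : ℝ := (x - w) * (2 - x - w) / δ ^ 2

lemma hfun_w (δ w : ℝ) : hfun δ w w = 0 := by simp [hfun]

lemma hfun_one (hn : 2 ≤ n) (hδ : δ = 1 / n) :
    hfun δ w 1 = (fun _ : ℝ => (1:ℝ)) 1 + hfun δ w (1 - δ) := by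
  have h0 : δ ≠ 0 := (δpos hn hδ).ne'
  simp only [hfun]
  field_simp
  ring

lemma hfun_mid (hn : 2 ≤ n) (hδ : δ = 1 / n) (x : ℝ) :
    hfun δ w (x + δ) + hfun δ w (x - δ) = 2 * (hfun δ w x - (fun _ : ℝ => (1:ℝ)) x) := by
  have h0 : δ ≠ 0 := (δpos hn hδ).ne'
  simp only [hfun]
  field_simp
  ring

lemma hfun_bound (hn : 2 ≤ n) (hδ : δ = 1 / n) (hw0 : 0 ≤ w) (hw1 : w ≤ 1)
    {x : ℝ} (hx0 : 0 ≤ x) (hx1 : x ≤ 1) : |hfun δ w x| ≤ 2 / δ ^ 2 + 1 := by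
  have hδ2 : 0 < δ ^ 2 := pow_pos (δpos hn hδ) 2
  have hnum : |(x - w) * (2 - x - w)| ≤ 2 := by
    rw [abs_le]
    constructor <;> nlinarith
  rw [hfun, abs_div, abs_of_pos hδ2]
  have h1 : |(x - w) * (2 - x - w)| / δ ^ 2 ≤ 2 / δ ^ 2 :=
    (div_le_div_iff_of_pos_right hδ2).mpr hnum
  linarith

lemma measurable_hfun (δ w : ℝ) : Measurable (hfun δ w) := by
  unfold hfun
  fun_prop

lemma hfun_nonneg (hn : 2 ≤ n) (hδ : δ = 1 / n) (hw1 : w ≤ 1) {x : ℝ} (hwx : w ≤ x)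
    (hx1 : x ≤ 1) : 0 ≤ hfun δ w x := by
  have hδ2 : 0 < δ ^ 2 := pow_pos (δpos hn hδ) 2
  unfold hfun
  apply div_nonneg _ hδ2.le
  nlinarith

lemma integrable_fclk (hC : IsCoinSeq P ξ) (hn : 2 ≤ n) (hδ : δ = 1 / n)
    (hv : v ∈ stateSpace n) {f : ℝ → ℝ} {M : ℝ} (hmf : Measurable f)
    (hfM : ∀ x, 0 ≤ x → x ≤ 1 → |f x| ≤ M) (t : ℕ) :
    Integrable (fun ω => f (walk δ ξ v (clk (walk δ ξ v) w t ω) ω)) P := by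
  obtain ⟨hmeas, hindep, hlaw⟩ := hC
  have hGae : ∀ᵐ ω ∂P, ∀ i, ξ i ω = 1 ∨ ξ i ω = -1 :=
    ae_all_iff.2 fun i => ae_coin (hmeas i) (hlaw i)
  have hVmeas := measurable_walk hmeas δ v
  refine Integrable.mono' (integrable_const M)
    (hmf.comp (measurable_nat_comp hVmeas (measurable_clk hVmeas w t))).aestronglyMeasurable ?_
  filter_upwards [hGae] with ω hG
  rw [Real.norm_eq_abs]
  have hmem := walk_mem hn hδ hv hG (clk (walk δ ξ v) w t ω)
  exact hfM _ (mem_nonneg hn hδ hmem) (mem_le_one hn hδ hmem)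

lemma abs_integral_fclk (hC : IsCoinSeq P ξ) (hn : 2 ≤ n) (hδ : δ = 1 / n)
    (hv : v ∈ stateSpace n) {f : ℝ → ℝ} {M : ℝ}
    (hfM : ∀ x, 0 ≤ x → x ≤ 1 → |f x| ≤ M) (t : ℕ) :
    |∫ ω, f (walk δ ξ v (clk (walk δ ξ v) w t ω) ω) ∂P| ≤ M := by
  obtain ⟨hmeas, hindep, hlaw⟩ := hC
  have hGae : ∀ᵐ ω ∂P, ∀ i, ξ i ω = 1 ∨ ξ i ω = -1 :=
    ae_all_iff.2 fun i => ae_coin (hmeas i) (hlaw i)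
  have hb : ∀ᵐ ω ∂P, ‖f (walk δ ξ v (clk (walk δ ξ v) w t ω) ω)‖ ≤ M := by
    filter_upwards [hGae] with ω hG
    rw [Real.norm_eq_abs]
    have hmem := walk_mem hn hδ hv hG (clk (walk δ ξ v) w t ω)
    exact hfM _ (mem_nonneg hn hδ hmem) (mem_le_one hn hδ hmem)
  have := norm_integral_le_of_norm_le_const (μ := P) hb
  simpa using this

/-- The stage sum with general reward `r`. -/
lemma integral_stage (hC : IsCoinSeq P ξ) (hn : 2 ≤ n) (hδ : δ = 1 / n)
    (hv : v ∈ stateSpace n) (hw : w ∈ stateSpace n) (hwv : w ≤ v)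
    {f r : ℝ → ℝ} {M : ℝ} (hmf : Measurable f) (hmr : Measurable r)
    (hf1 : f 1 = r 1 + f (1 - δ)) (hmid : ∀ x, f (x + δ) + f (x - δ) = 2 * (f x - r x))
    (hfM : ∀ x, 0 ≤ x → x ≤ 1 → |f x| ≤ M) (hrM : ∀ x, 0 ≤ x → x ≤ 1 → |r x| ≤ M)
    (t : ℕ) :
    Integrable (fun ω => ∑ s ∈ Finset.range (clk (walk δ ξ v) w t ω), r (walk δ ξ v s ω)) P ∧
    ∫ ω, (∑ s ∈ Finset.range (clk (walk δ ξ v) w t ω), r (walk δ ξ v s ω)) ∂P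
      = f v - ∫ ω, f (walk δ ξ v (clk (walk δ ξ v) w t ω) ω) ∂P := by
  have hmartint := integrable_mart hC hn hδ hv hmf hmr hfM hrM (w := w) (r := r) t
  have hfclkint := integrable_fclk hC hn hδ hv hmf hfM (w := w) t
  have hstage : (fun ω => ∑ s ∈ Finset.range (clk (walk δ ξ v) w t ω), r (walk δ ξ v s ω))
      = fun ω => mart ξ δ v w f r t ω - f (walk δ ξ v (clk (walk δ ξ v) w t ω) ω) := by
    funext ω
    unfold mart
    ring
  constructor
  · rw [hstage]
    exact hmartint.sub hfclkint
  · rw [hstage, integral_sub hmartint hfclkint,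
      integral_mart hC hn hδ hv hw hwv hmf hmr hf1 hmid hfM hrM t]

lemma hit_ae (hC : IsCoinSeq P ξ) (hn : 2 ≤ n) (hδ : δ = 1 / n)
    (hv : v ∈ stateSpace n) (hw : w ∈ stateSpace n) (hwv : w ≤ v) :
    ∀ᵐ ω ∂P, ∃ s, walk δ ξ v s ω = w := by
  have hw0 := mem_nonneg hn hδ hw
  have hw1 := mem_le_one hn hδ hw
  have hδ2 : 0 < δ ^ 2 := pow_pos (δpos hn hδ) 2
  set M : ℝ := 2 / δ ^ 2 + 1 with hM
  have hfM : ∀ x, 0 ≤ x → x ≤ 1 → |hfun δ w x| ≤ M := fun x h1 h2 =>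
    hfun_bound hn hδ hw0 hw1 h1 h2
  have hrM : ∀ x : ℝ, 0 ≤ x → x ≤ 1 → |(fun _ : ℝ => (1:ℝ)) x| ≤ M := by
    intro x _ _
    have : (0:ℝ) ≤ 2 / δ ^ 2 := by positivity
    simp only [abs_one, hM]
    linarith
  set V := walk δ ξ v with hV
  have hstage := fun t => integral_stage hC hn hδ hv hw hwv (measurable_hfun δ w)
    measurable_const (hfun_one hn hδ) (hfun_mid hn hδ) hfM hrM t
  have hsum_eq : ∀ t, (fun ω => ∑ s ∈ Finset.range (clk V w t ω), (fun _ : ℝ => (1:ℝ)) (V s ω))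
      = fun ω => (clk V w t ω : ℝ) := by
    intro t
    funext ω
    simp
  -- the expected clock value is uniformly bounded
  set B : ℝ := hfun δ w v + M with hB
  have hclk_bdd : ∀ t, ∫ ω, (clk V w t ω : ℝ) ∂P ≤ B := by
    intro t
    rw [← hsum_eq t]
    rw [(hstage t).2]
    have := abs_integral_fclk hC hn hδ hv (w := w) hfM t
    rw [abs_le] at this
    rw [hB]
    linarith [this.1]
  have hclk_int : ∀ t, Integrable (fun ω => (clk V w t ω : ℝ)) P := by
    intro t
    have := (hstage t).1
    rw [hsum_eq t] at this
    exact this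
  -- the never-hit set
  set NH : Set Ω := ⋂ s, (V s) ⁻¹' {w}ᶜ with hNH
  have hNHmeas : MeasurableSet NH := by
    obtain ⟨hmeas, _, _⟩ := hC
    exact MeasurableSet.iInter fun s =>
      ((measurable_walk hmeas δ v s) (measurableSet_singleton w)).compl
  have hNHmem : ∀ ω, ω ∈ NH ↔ ∀ s, V s ω ≠ w := by
    intro ω
    simp [hNH]
  have hlow : ∀ t : ℕ, (t : ℝ) * (P NH).toReal ≤ B := by
    intro t
    have hclk_on : ∀ ω ∈ NH, (clk V w t ω : ℝ) = (t : ℝ) := by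
      intro ω hω
      rw [clk_eq_of_forall t (fun s _ => (hNHmem ω).mp hω s)]
    have h1 : ∫ ω in NH, (clk V w t ω : ℝ) ∂P = (t : ℝ) * (P NH).toReal := by
      rw [setIntegral_congr_fun hNHmeas hclk_on, setIntegral_const, smul_eq_mul]
      rw [measureReal_def]
      ring
    have h2 : ∫ ω in NH, (clk V w t ω : ℝ) ∂P ≤ ∫ ω, (clk V w t ω : ℝ) ∂P :=
      setIntegral_le_integral (hclk_int t)
        (Filter.Eventually.of_forall fun ω => by positivity)
    rw [← h1] at *
    linarith [hclk_bdd t]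
  have hPNH : P NH = 0 := by
    by_contra hne
    have hpos : 0 < (P NH).toReal :=
      ENNReal.toReal_pos hne (measure_ne_top P NH)
    obtain ⟨t, ht⟩ := exists_nat_gt (B / (P NH).toReal)
    have := hlow t
    rw [div_lt_iff₀ hpos] at ht
    linarith
  rw [ae_iff]
  have : {ω | ¬∃ s, V s ω = w} = NH := by
    ext ω
    rw [hNHmem ω]
    push_neg
    rfl
  rw [this]
  exact hPNH

end Hit

/-! ### The key limit theorem -/

section Key

variable {Ω : Type} [MeasurableSpace Ω] {P : Measure Ω} [IsProbabilityMeasure P]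
  {ξ : ℕ → Ω → ℝ} {n : ℕ} {δ v w : ℝ} {f r : ℝ → ℝ} {M : ℝ}

theorem key_limit (hC : IsCoinSeq P ξ) (hn : 2 ≤ n) (hδ : δ = 1 / n)
    (hv : v ∈ stateSpace n) (hw : w ∈ stateSpace n) (hwv : w ≤ v)
    (hmf : Measurable f) (hmr : Measurable r) (hfw : f w = 0)
    (hf1 : f 1 = r 1 + f (1 - δ)) (hmid : ∀ x, f (x + δ) + f (x - δ) = 2 * (f x - r x))
    (hfM : ∀ x, 0 ≤ x → x ≤ 1 → |f x| ≤ M) (hrM : ∀ x, 0 ≤ x → x ≤ 1 → |r x| ≤ M)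
    (hr0 : ∀ x, 0 ≤ x → x ≤ 1 → 0 ≤ r x) :
    Integrable (fun ω => ∑ s ∈ Finset.range (hitTime (walk δ ξ v) w ω), r (walk δ ξ v s ω)) P ∧
    ∫ ω, (∑ s ∈ Finset.range (hitTime (walk δ ξ v) w ω), r (walk δ ξ v s ω)) ∂P = f v := by
  have hGae : ∀ᵐ ω ∂P, ∀ i, ξ i ω = 1 ∨ ξ i ω = -1 :=
    ae_all_iff.2 fun i => ae_coin (hC.1 i) (hC.2.2 i)
  have hHit := hit_ae hC hn hδ hv hw hwv
  set V := walk δ ξ v with hV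
  have hVmeas := measurable_walk hC.1 δ v
  set stage : ℕ → Ω → ℝ := fun t ω => ∑ s ∈ Finset.range (clk V w t ω), r (V s ω) with hsta
  set target : Ω → ℝ := fun ω => ∑ s ∈ Finset.range (hitTime V w ω), r (V s ω) with htar
  set fclk : ℕ → Ω → ℝ := fun t ω => f (V (clk V w t ω) ω) with hfc
  have hstage := fun t =>
    integral_stage hC hn hδ hv hw hwv hmf hmr hf1 hmid hfM hrM t
  have hstagemeas : ∀ t, Measurable (stage t) := fun t =>
    measurable_sum_range (fun k => hmr.comp (hVmeas k)) (measurable_clk hVmeas w t)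
  have htargetmeas : Measurable target :=
    measurable_sum_range (fun k => hmr.comp (hVmeas k)) (measurable_hitTime hVmeas w)
  -- pointwise facts on the good event
  have hstage_nonneg : ∀ᵐ ω ∂P, ∀ t, 0 ≤ stage t ω := by
    filter_upwards [hGae] with ω hG t
    refine Finset.sum_nonneg fun s _ => ?_
    have hmem := walk_mem hn hδ hv hG s
    exact hr0 _ (mem_nonneg hn hδ hmem) (mem_le_one hn hδ hmem)
  have htarget_nonneg : ∀ᵐ ω ∂P, 0 ≤ target ω := by
    filter_upwards [hGae] with ω hG
    refine Finset.sum_nonneg fun s _ => ?_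
    have hmem := walk_mem hn hδ hv hG s
    exact hr0 _ (mem_nonneg hn hδ hmem) (mem_le_one hn hδ hmem)
  have hclk_min : ∀ᵐ ω ∂P, ∀ t, clk V w t ω = min t (hitTime V w ω) := by
    filter_upwards [hHit] with ω hhit t
    have hVN : V (hitTime V w ω) ω = w := Nat.sInf_mem hhit
    have hmin : ∀ s, s < hitTime V w ω → V s ω ≠ w := fun s hs =>
      Nat.notMem_of_lt_sInf hs
    exact clk_eq_min hVN hmin t
  have hstage_le : ∀ᵐ ω ∂P, ∀ t, stage t ω ≤ target ω := by
    filter_upwards [hGae, hclk_min] with ω hG hcm t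
    rw [hsta]
    simp only
    rw [hcm t]
    refine Finset.sum_le_sum_of_subset_of_nonneg
      (Finset.range_subset_range.mpr (min_le_right _ _)) (fun s _ _ => ?_)
    have hmem := walk_mem hn hδ hv hG s
    exact hr0 _ (mem_nonneg hn hδ hmem) (mem_le_one hn hδ hmem)
  have hstage_tendsto : ∀ᵐ ω ∂P, Filter.Tendsto (fun t => stage t ω)
      Filter.atTop (nhds (target ω)) := by
    filter_upwards [hclk_min] with ω hcm
    have hev : ∀ᶠ t in Filter.atTop, stage t ω = target ω := by
      rw [Filter.eventually_atTop]
      exact ⟨hitTime V w ω, fun t ht => by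
        rw [hsta]; simp only; rw [hcm t, min_eq_right ht]⟩
    exact Filter.Tendsto.congr' (hev.mono fun t ht => ht.symm) tendsto_const_nhds
  have hfclk_tendsto_pt : ∀ᵐ ω ∂P, Filter.Tendsto (fun t => fclk t ω)
      Filter.atTop (nhds 0) := by
    filter_upwards [hclk_min, hHit] with ω hcm hhit
    have hVN : V (hitTime V w ω) ω = w := Nat.sInf_mem hhit
    have hev : ∀ᶠ t in Filter.atTop, fclk t ω = 0 := by
      rw [Filter.eventually_atTop]
      refine ⟨hitTime V w ω, fun t ht => ?_⟩
      rw [hfc]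
      simp only
      rw [hcm t, min_eq_right ht, hVN, hfw]
    exact Filter.Tendsto.congr' (hev.mono fun t ht => ht.symm) tendsto_const_nhds
  have hfclk_bound : ∀ t, ∀ᵐ ω ∂P, ‖fclk t ω‖ ≤ M := by
    intro t
    filter_upwards [hGae] with ω hG
    rw [Real.norm_eq_abs]
    have hmem := walk_mem hn hδ hv hG (clk V w t ω)
    exact hfM _ (mem_nonneg hn hδ hmem) (mem_le_one hn hδ hmem)
  -- Step A: the boundary term tends to 0
  have hfclk_int_tendsto : Filter.Tendsto (fun t => ∫ ω, fclk t ω ∂P)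
      Filter.atTop (nhds 0) := by
    have h := MeasureTheory.tendsto_integral_of_dominated_convergence (μ := P)
      (F := fclk) (f := fun _ => (0:ℝ)) (bound := fun _ => M)
      (fun t => (hmf.comp (measurable_nat_comp hVmeas
        (measurable_clk hVmeas w t))).aestronglyMeasurable)
      (integrable_const M) hfclk_bound hfclk_tendsto_pt
    simpa using h
  -- Step B: the stage integrals tend to f v
  have hstage_int_tendsto : Filter.Tendsto (fun t => ∫ ω, stage t ω ∂P)
      Filter.atTop (nhds (f v)) := by
    have heq : (fun t => ∫ ω, stage t ω ∂P) = fun t => f v - ∫ ω, fclk t ω ∂P :=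
      funext fun t => (hstage t).2
    rw [heq]
    simpa using (tendsto_const_nhds.sub hfclk_int_tendsto)
  -- Step C: the target is integrable
  have hstage_int_le : ∀ t, ∫ ω, stage t ω ∂P ≤ f v + M := by
    intro t
    rw [(hstage t).2]
    have := abs_integral_fclk hC hn hδ hv (w := w) hfM t
    rw [abs_le] at this
    linarith [this.1]
  have htarget_int : Integrable target P := by
    refine ⟨htargetmeas.aestronglyMeasurable, ?_⟩
    rw [hasFiniteIntegral_iff_ofReal htarget_nonneg]
    have hcongr : (fun ω => ENNReal.ofReal (target ω))
        =ᵐ[P] fun ω => Filter.liminf (fun t => ENNReal.ofReal (stage t ω)) Filter.atTop := by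
      filter_upwards [hclk_min] with ω hcm
      have hev : ∀ᶠ t in Filter.atTop, ENNReal.ofReal (stage t ω)
          = ENNReal.ofReal (target ω) := by
        rw [Filter.eventually_atTop]
        exact ⟨hitTime V w ω, fun t ht => by
          rw [hsta]; simp only; rw [hcm t, min_eq_right ht]⟩
      rw [Filter.liminf_congr hev, Filter.liminf_const]
    rw [lintegral_congr_ae hcongr]
    have h1 : ∫⁻ ω, Filter.liminf (fun t => ENNReal.ofReal (stage t ω)) Filter.atTop ∂P
        ≤ Filter.liminf (fun t => ∫⁻ ω, ENNReal.ofReal (stage t ω) ∂P) Filter.atTop :=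
      lintegral_liminf_le fun t => (hstagemeas t).ennreal_ofReal
    have h2 : ∀ t, ∫⁻ ω, ENNReal.ofReal (stage t ω) ∂P ≤ ENNReal.ofReal (f v + M) := by
      intro t
      rw [← ofReal_integral_eq_lintegral_ofReal (hstage t).1
        (by filter_upwards [hstage_nonneg] with ω h using h t)]
      exact ENNReal.ofReal_le_ofReal (hstage_int_le t)
    have h3 : Filter.liminf (fun t => ∫⁻ ω, ENNReal.ofReal (stage t ω) ∂P) Filter.atTop
        ≤ ENNReal.ofReal (f v + M) := by
      refine le_trans (Filter.liminf_le_liminf (Filter.Eventually.of_forall h2)) ?_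
      simp [Filter.liminf_const]
    exact lt_of_le_of_lt (le_trans h1 h3) ENNReal.ofReal_lt_top
  -- Step D: dominated convergence towards the target
  have hDCT : Filter.Tendsto (fun t => ∫ ω, stage t ω ∂P)
      Filter.atTop (nhds (∫ ω, target ω ∂P)) := by
    refine MeasureTheory.tendsto_integral_of_dominated_convergence
      (F := stage) (f := target) (bound := target)
      (fun t => (hstagemeas t).aestronglyMeasurable) htarget_int ?_ hstage_tendsto
    intro t
    filter_upwards [hstage_nonneg, hstage_le] with ω h1 h2
    rw [Real.norm_eq_abs, abs_of_nonneg (h1 t)]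
    exact h2 t
  exact ⟨htarget_int, tendsto_nhds_unique hDCT hstage_int_tendsto⟩

end Key

/-! ### The cubic potential for cumulative value -/

section Gfun

variable {n : ℕ} {δ w : ℝ}

/-- Potential whose associated reward is the running value `x` itself. -/
def gfun (δ w x : ℝ) : ℝ := ((w ^ 3 - x ^ 3) + (3 + δ ^ 2) * (x - w)) / (3 * δ ^ 2)

lemma gfun_w (δ w : ℝ) : gfun δ w w = 0 := by simp [gfun]

lemma gfun_one (hn : 2 ≤ n) (hδ : δ = 1 / n) :
    gfun δ w 1 = id 1 + gfun δ w (1 - δ) := by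
  have h0 : δ ≠ 0 := (δpos hn hδ).ne'
  simp only [gfun, id]
  field_simp
  ring

lemma gfun_mid (hn : 2 ≤ n) (hδ : δ = 1 / n) (x : ℝ) :
    gfun δ w (x + δ) + gfun δ w (x - δ) = 2 * (gfun δ w x - id x) := by
  have h0 : δ ≠ 0 := (δpos hn hδ).ne'
  simp only [gfun, id]
  field_simp
  ring

lemma gfun_bound (hn : 2 ≤ n) (hδ : δ = 1 / n) (hw0 : 0 ≤ w) (hw1 : w ≤ 1)
    {x : ℝ} (hx0 : 0 ≤ x) (hx1 : x ≤ 1) : |gfun δ w x| ≤ 2 / δ ^ 2 + 1 := by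
  have hδ2 : 0 < δ ^ 2 := pow_pos (δpos hn hδ) 2
  have hδle : δ ≤ 1 / 2 := δle hn hδ
  have hδ0 : 0 < δ := δpos hn hδ
  have hδ2le : δ ^ 2 ≤ 1 := by nlinarith
  have hnum : |(w ^ 3 - x ^ 3) + (3 + δ ^ 2) * (x - w)| ≤ 4 + δ ^ 2 := by
    rw [abs_le]
    constructor <;> nlinarith [pow_le_one₀ hw0 hw1 (n := 3), pow_le_one₀ hx0 hx1 (n := 3),
      pow_nonneg hw0 3, pow_nonneg hx0 3]
  have h3δ2 : 0 < 3 * δ ^ 2 := by positivity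
  rw [gfun, abs_div, abs_of_pos h3δ2]
  rw [div_le_iff₀ h3δ2]
  calc |(w ^ 3 - x ^ 3) + (3 + δ ^ 2) * (x - w)| ≤ 4 + δ ^ 2 := hnum
    _ ≤ (2 / δ ^ 2 + 1) * (3 * δ ^ 2) := by
        have : (2 / δ ^ 2) * δ ^ 2 = 2 := div_mul_cancel₀ 2 hδ2.ne'
        nlinarith
lemma measurable_gfun (δ w : ℝ) : Measurable (gfun δ w) := by
  unfold gfun
  fun_prop

/-- Main algebraic inequality: the cumulative-value potential dominates half the
hitting-time potential. -/
lemma gfun_ge_half_hfun (hn : 2 ≤ n) (hδ : δ = 1 / n) {v : ℝ} (hw0 : 0 ≤ w)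
    (hwv : w ≤ v) (hv1 : v ≤ 1) : (1 / 2) * hfun δ w v ≤ gfun δ w v := by
  have hδ2 : 0 < δ ^ 2 := pow_pos (δpos hn hδ) 2
  have key : (0:ℝ) ≤ (v - w) * (δ ^ 2 + (3/2) * (v + w) - (v^2 + v*w + w^2)) := by
    refine mul_nonneg (by linarith) ?_
    have hv0 : 0 ≤ v := le_trans hw0 hwv
    have hw1 : w ≤ 1 := le_trans hwv hv1
    nlinarith [mul_nonneg hv0 (sub_nonneg.2 hv1), mul_nonneg hw0 (sub_nonneg.2 hw1),
      mul_nonneg hv0 (sub_nonneg.2 hw1), mul_nonneg hw0 (sub_nonneg.2 hv1)]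
  have heq : gfun δ w v - (1 / 2) * hfun δ w v
      = ((v - w) * (δ ^ 2 + (3/2) * (v + w) - (v^2 + v*w + w^2))) / (3 * δ ^ 2) := by
    unfold gfun hfun
    field_simp
    ring
  have : 0 ≤ gfun δ w v - (1 / 2) * hfun δ w v := by
    rw [heq]
    positivity
  linarith

lemma hfun_zero_eval (hn : 2 ≤ n) (hδ : δ = 1 / n) (v : ℝ) :
    (1 / 2) * hfun δ 0 v = v * (2 - v) / (2 * δ ^ 2) := by
  have hδ2 : 0 < δ ^ 2 := pow_pos (δpos hn hδ) 2
  unfold hfun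
  field_simp
  ring

end Gfun

/-! ### Specialized corollaries -/

section Cor

variable {Ω : Type} [MeasurableSpace Ω] {P : Measure Ω} [IsProbabilityMeasure P]
  {ξ : ℕ → Ω → ℝ} {n : ℕ} {δ v w : ℝ}

lemma key_hitTime (hC : IsCoinSeq P ξ) (hn : 2 ≤ n) (hδ : δ = 1 / n)
    (hv : v ∈ stateSpace n) (hw : w ∈ stateSpace n) (hwv : w ≤ v) :
    Integrable (fun ω => (hitTime (walk δ ξ v) w ω : ℝ)) P ∧
    ∫ ω, (hitTime (walk δ ξ v) w ω : ℝ) ∂P = hfun δ w v := by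
  have hw0 := mem_nonneg hn hδ hw
  have hw1 := mem_le_one hn hδ hw
  have hδ2 : 0 < δ ^ 2 := pow_pos (δpos hn hδ) 2
  have hM2 : (0:ℝ) ≤ 2 / δ ^ 2 := by positivity
  have hkey := key_limit (M := 2 / δ ^ 2 + 1) hC hn hδ hv hw hwv (measurable_hfun δ w)
    measurable_const (hfun_w δ w) (hfun_one hn hδ) (hfun_mid hn hδ)
    (fun x h1 h2 => hfun_bound hn hδ hw0 hw1 h1 h2)
    (fun x _ _ => by simp only [abs_one]; linarith)
    (fun x _ _ => by norm_num)
  have heq : (fun ω => ∑ s ∈ Finset.range (hitTime (walk δ ξ v) w ω),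
      (fun _ : ℝ => (1:ℝ)) (walk δ ξ v s ω)) = fun ω => (hitTime (walk δ ξ v) w ω : ℝ) := by
    funext ω
    simp
  rw [heq] at hkey
  exact hkey

lemma key_cumul (hC : IsCoinSeq P ξ) (hn : 2 ≤ n) (hδ : δ = 1 / n)
    (hv : v ∈ stateSpace n) (hw : w ∈ stateSpace n) (hwv : w ≤ v) :
    Integrable (fun ω => ∑ s ∈ Finset.range (hitTime (walk δ ξ v) w ω), walk δ ξ v s ω) P ∧
    ∫ ω, (∑ s ∈ Finset.range (hitTime (walk δ ξ v) w ω), walk δ ξ v s ω) ∂P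
      = gfun δ w v := by
  have hw0 := mem_nonneg hn hδ hw
  have hw1 := mem_le_one hn hδ hw
  have hδ2 : 0 < δ ^ 2 := pow_pos (δpos hn hδ) 2
  have hM2 : (0:ℝ) ≤ 2 / δ ^ 2 := by positivity
  have hkey := key_limit (M := 2 / δ ^ 2 + 1) hC hn hδ hv hw hwv (measurable_gfun δ w)
    measurable_id (gfun_w δ w) (gfun_one hn hδ) (gfun_mid hn hδ)
    (fun x h1 h2 => gfun_bound hn hδ hw0 hw1 h1 h2)
    (fun x h1 h2 => by simp only [id, abs_le]; constructor <;> linarith)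
    (fun x h1 _ => by simpa using h1)
  simpa only [id] using hkey

end Cor

end PPPAux

open PPPAux in
/-- For every price `p ≤ 1/2` and all states `v, w ∈ S` with `w ≤ v`,
the expected future utility `U(v,w,p) = E_v[Σ_{t<τ_w}(V_t − p)]` is nonnegative.
Consequently, under the constant-price PPP scheme with per-use price `1/2`, a risk-neutral
buyer starting at `v` keeps buying until his value hits `0`, paying in expectation
`(1/2)·E_v[τ₀] = v(2 − v)/(2δ²)`, and this expected payment is at least half his expected
cumulative value `C(v) = E_v[Σ_{t<τ₀} V_t]`. -/
theorem ppp_half_price_extracts_half_welfare {Ω : Type} [MeasurableSpace Ω] (P : Measure Ω)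
    [IsProbabilityMeasure P] (ξ : ℕ → Ω → ℝ) (hξ : IsCoinSeq P ξ)
    (n : ℕ) (hn : 2 ≤ n) (δ : ℝ) (hδ : δ = 1 / n) :
    (∀ p : ℝ, p ≤ 1 / 2 → ∀ v ∈ stateSpace n, ∀ w ∈ stateSpace n, w ≤ v →
      0 ≤ ∫ ω, (∑ t ∈ Finset.range (hitTime (walk δ ξ v) w ω),
            (walk δ ξ v t ω - p)) ∂P) ∧
    (∀ v ∈ stateSpace n,
      (1 / 2) * (∫ ω, (hitTime (walk δ ξ v) 0 ω : ℝ) ∂P) = v * (2 - v) / (2 * δ ^ 2) ∧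
      (1 / 2) * (∫ ω, (∑ t ∈ Finset.range (hitTime (walk δ ξ v) 0 ω), walk δ ξ v t ω) ∂P)
        ≤ (1 / 2) * (∫ ω, (hitTime (walk δ ξ v) 0 ω : ℝ) ∂P)) := by
  constructor
  · intro p hp v hv w hw hwv
    obtain ⟨hτint, hτval⟩ := key_hitTime hξ hn hδ hv hw hwv
    obtain ⟨hCint, hCval⟩ := key_cumul hξ hn hδ hv hw hwv
    have hpteq : (fun ω => ∑ t ∈ Finset.range (hitTime (walk δ ξ v) w ω),
        (walk δ ξ v t ω - p))
        = fun ω => (∑ t ∈ Finset.range (hitTime (walk δ ξ v) w ω), walk δ ξ v t ω)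
            - p * (hitTime (walk δ ξ v) w ω : ℝ) := by
      funext ω
      rw [Finset.sum_sub_distrib, Finset.sum_const, Finset.card_range, nsmul_eq_mul]
      ring
    rw [hpteq, integral_sub hCint (hτint.const_mul p), integral_const_mul, hCval, hτval]
    have h1 : (1/2) * hfun δ w v ≤ gfun δ w v :=
      gfun_ge_half_hfun hn hδ (mem_nonneg hn hδ hw) hwv (mem_le_one hn hδ hv)
    have h2 : 0 ≤ hfun δ w v :=
      hfun_nonneg hn hδ (mem_le_one hn hδ hw) hwv (mem_le_one hn hδ hv)
    nlinarith [mul_le_mul_of_nonneg_right hp h2]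
  · intro v hv
    have hw : (0:ℝ) ∈ stateSpace n := zero_mem hn hδ
    have hwv : (0:ℝ) ≤ v := mem_nonneg hn hδ hv
    obtain ⟨hτint, hτval⟩ := key_hitTime hξ hn hδ hv hw hwv
    obtain ⟨hCint, hCval⟩ := key_cumul hξ hn hδ hv hw hwv
    constructor
    · rw [hτval]
      exact hfun_zero_eval hn hδ v
    · refine mul_le_mul_of_nonneg_left ?_ (by norm_num)
      refine integral_mono_ae hCint hτint ?_
      have hGae : ∀ᵐ ω ∂P, ∀ i, ξ i ω = 1 ∨ ξ i ω = -1 :=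
        ae_all_iff.2 fun i => ae_coin (hξ.1 i) (hξ.2.2 i)
      filter_upwards [hGae] with ω hG
      calc ∑ t ∈ Finset.range (hitTime (walk δ ξ v) 0 ω), walk δ ξ v t ω
          ≤ ∑ _t ∈ Finset.range (hitTime (walk δ ξ v) 0 ω), (1:ℝ) := by
            refine Finset.sum_le_sum fun t _ => ?_
            exact mem_le_one hn hδ (walk_mem hn hδ hv hG t)
        _ = (hitTime (walk δ ξ v) 0 ω : ℝ) := by simp
end
end

section
/- Let V₀ be a [0,1]-valued random variable and let t ∈ (0,1]. Then E[(t/2)·(V₀ − t/2)·(2 − V₀ − t/2)·1{V₀ ≥ t/2}] ≥ (t²/8)·Pr[V₀ ≥ t]. Equivalently, dividing by δ², the constant-price PPP scheme with per-use price t/2 earns from an infinitely risk-averse buyer revenue at least (1/(4δ)) times the infinitely-risk-averse BIN revenue (t²/(2δ))·Pr[V₀ ≥ t] at threshold t; taking t to be the maximizer of t²·Pr[V₀ ≥ t] shows R^PPP_∞ ≥ (1/(4δ))·R^BIN_∞. -/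
open MeasureTheory

noncomputable section

/-- Let `V₀` be a `[0,1]`-valued random variable and `t ∈ (0,1]`.  Then
`E[(t/2)·(V₀ − t/2)·(2 − V₀ − t/2)·1{V₀ ≥ t/2}] ≥ (t²/8)·Pr[V₀ ≥ t]`.  (Dividing by `δ²`:
in the random-walk model the constant-price PPP scheme with per-use price `t/2` earns from
an infinitely risk-averse buyer at least `1/(4δ)` times the infinitely-risk-averse BIN
revenue `(t²/(2δ))·Pr[V₀ ≥ t]` at threshold `t`; taking `t` maximizing `t²·Pr[V₀ ≥ t]`
gives `R^PPP_∞ ≥ (1/(4δ))·R^BIN_∞`.) -/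
theorem ppp_vs_bin_risk_averse {Ω : Type} [MeasurableSpace Ω] (P : Measure Ω)
    [IsProbabilityMeasure P] (V₀ : Ω → ℝ) (hV₀ : Measurable V₀)
    (hrange : ∀ ω, V₀ ω ∈ Set.Icc (0 : ℝ) 1)
    (t : ℝ) (ht : t ∈ Set.Ioc (0 : ℝ) 1) :
    (t ^ 2 / 8) * (P {ω | t ≤ V₀ ω}).toReal
      ≤ ∫ ω in {ω | t / 2 ≤ V₀ ω},
          (t / 2) * (V₀ ω - t / 2) * (2 - V₀ ω - t / 2) ∂P := by
  obtain ⟨ht0, ht1⟩ := ht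
  set f : Ω → ℝ := fun ω => (t / 2) * (V₀ ω - t / 2) * (2 - V₀ ω - t / 2) with hf
  have hsmall : MeasurableSet {ω | t ≤ V₀ ω} := hV₀ measurableSet_Ici
  have hbig : MeasurableSet {ω | t / 2 ≤ V₀ ω} := hV₀ measurableSet_Ici
  have hsub : {ω | t ≤ V₀ ω} ⊆ {ω | t / 2 ≤ V₀ ω} := by
    intro ω hω; simp only [Set.mem_setOf_eq] at *; linarith
  have hfm : Measurable f := by
    apply Measurable.mul
    · exact (measurable_const.mul (hV₀.sub measurable_const))
    · exact (measurable_const.sub hV₀).sub measurable_const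
  have hfint : Integrable f P := by
    refine (integrable_const (2 : ℝ)).mono' hfm.aestronglyMeasurable ?_
    filter_upwards with ω
    obtain ⟨h0, h1⟩ := hrange ω
    rw [Real.norm_eq_abs, abs_mul, abs_mul]
    have a1 : |t / 2| ≤ 1 / 2 := by rw [abs_of_pos (by linarith)]; linarith
    have a2 : |V₀ ω - t / 2| ≤ 1 := by rw [abs_le]; constructor <;> linarith
    have a3 : |2 - V₀ ω - t / 2| ≤ 2 := by rw [abs_le]; constructor <;> linarith
    have := mul_le_mul (mul_le_mul a1 a2 (abs_nonneg _) (by norm_num)) a3 (abs_nonneg _) (by norm_num)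
    linarith
  have h1 : (t ^ 2 / 8) * (P {ω | t ≤ V₀ ω}).toReal
      = ∫ ω in {ω | t ≤ V₀ ω}, (t ^ 2 / 8) ∂P := by
    rw [setIntegral_const, smul_eq_mul, mul_comm]
    rfl
  rw [h1]
  have h2 : ∫ ω in {ω | t ≤ V₀ ω}, (t ^ 2 / 8) ∂P ≤ ∫ ω in {ω | t ≤ V₀ ω}, f ω ∂P := by
    refine setIntegral_mono_on (integrable_const _) hfint.integrableOn hsmall ?_
    intro ω hω
    simp only [Set.mem_setOf_eq] at hω
    obtain ⟨h0, h1'⟩ := hrange ω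
    have ha : t / 2 ≤ V₀ ω - t / 2 := by linarith
    have hb : 1 / 2 ≤ 2 - V₀ ω - t / 2 := by linarith
    calc t ^ 2 / 8 = (t / 2) * (t / 2) * (1 / 2) := by ring
      _ ≤ (t / 2) * (V₀ ω - t / 2) * (2 - V₀ ω - t / 2) := by
          apply mul_le_mul (mul_le_mul le_rfl ha (by linarith) (by linarith)) hb (by linarith)
            (mul_nonneg (by linarith) (by linarith))
  refine h2.trans ?_
  refine setIntegral_mono_set hfint.integrableOn ?_ (HasSubset.Subset.eventuallyLE hsub)
  filter_upwards [ae_restrict_mem hbig] with ω hω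
  have hω : t / 2 ≤ V₀ ω := hω
  obtain ⟨h0, h1'⟩ := hrange ω
  have : (0:ℝ) ≤ f ω := by
    apply mul_nonneg (mul_nonneg (by linarith) (by linarith)) (by linarith)
  exact this
end
end

section
/- Let V₀ be a [0,1]-valued random variable and let μ ∈ (0,1] be a monopoly price of its distribution, i.e. μ·Pr[V₀ ≥ μ] = sup_{p>0} p·Pr[V₀ ≥ p] =: R^Mye. Then E[(μ/2)·(V₀ − μ/2)·(2 − μ/2 − V₀)·1{V₀ ≥ μ/2}] ≥ (μ/8)·R^Mye. Equivalently, dividing by δ², the constant-price PPP scheme with per-use price μ/2 earns from an infinitely risk-averse buyer revenue at least (μ/(8δ²))·R^Mye, which is at least a μ/10 fraction of the optimal risk-neutral BIN revenue (the latter being at most (5/(4δ²))·R^Mye). -/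
open MeasureTheory

noncomputable section

/-- Let `V₀` be a `[0,1]`-valued random variable and let `μ ∈ (0,1]` be
a monopoly price of its distribution, i.e. `μ·Pr[V₀ ≥ μ] = sup_{p>0} p·Pr[V₀ ≥ p] = R^Mye`.
Then `E[(μ/2)·(V₀ − μ/2)·(2 − μ/2 − V₀)·1{V₀ ≥ μ/2}] ≥ (μ/8)·R^Mye`.  (Dividing by `δ²`:
the constant-price PPP scheme with per-use price `μ/2` earns from an infinitely
risk-averse buyer revenue at least `(μ/(8δ²))·R^Mye`, which is at least a `μ/10` fraction
of the optimal risk-neutral BIN revenue, the latter being at most `(5/(4δ²))·R^Mye`.) -/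
theorem ppp_vs_myerson {Ω : Type} [MeasurableSpace Ω] (P : Measure Ω)
    [IsProbabilityMeasure P] (V₀ : Ω → ℝ) (hV₀ : Measurable V₀)
    (hrange : ∀ ω, V₀ ω ∈ Set.Icc (0 : ℝ) 1)
    (μ : ℝ) (hμ : μ ∈ Set.Ioc (0 : ℝ) 1)
    (hmono : μ * (P {ω | μ ≤ V₀ ω}).toReal
      = sSup {r : ℝ | ∃ p : ℝ, 0 < p ∧ r = p * (P {ω | p ≤ V₀ ω}).toReal}) :
    (μ / 8) * sSup {r : ℝ | ∃ p : ℝ, 0 < p ∧ r = p * (P {ω | p ≤ V₀ ω}).toReal}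
      ≤ ∫ ω in {ω | μ / 2 ≤ V₀ ω},
          (μ / 2) * (V₀ ω - μ / 2) * (2 - μ / 2 - V₀ ω) ∂P := by
  obtain ⟨hμ0, hμ1⟩ := hμ
  set f : Ω → ℝ := fun ω => (μ / 2) * (V₀ ω - μ / 2) * (2 - μ / 2 - V₀ ω) with hf
  have hfm : Measurable f := by fun_prop
  have hA : MeasurableSet {ω | μ / 2 ≤ V₀ ω} := hV₀ measurableSet_Ici
  have hB : MeasurableSet {ω | μ ≤ V₀ ω} := hV₀ measurableSet_Ici
  have hint : Integrable f P := by
    refine (integrable_const (1 : ℝ)).mono' hfm.aestronglyMeasurable (ae_of_all _ ?_)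
    intro ω
    obtain ⟨h0, h1⟩ := hrange ω
    rw [Real.norm_eq_abs, hf]
    simp only
    rw [abs_mul, abs_mul]
    calc |μ / 2| * |V₀ ω - μ / 2| * |2 - μ / 2 - V₀ ω| ≤ (1 / 2) * 1 * 2 := by
          gcongr <;> rw [abs_le] <;> constructor <;> linarith
      _ = 1 := by norm_num
  have hBA : {ω | μ ≤ V₀ ω} ⊆ {ω | μ / 2 ≤ V₀ ω} := by
    intro ω hω; simp only [Set.mem_setOf_eq] at *; linarith
  have step1 : ∫ ω in {ω | μ ≤ V₀ ω}, f ω ∂P ≤ ∫ ω in {ω | μ / 2 ≤ V₀ ω}, f ω ∂P := by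
    refine setIntegral_mono_set hint.integrableOn ?_ (HasSubset.Subset.eventuallyLE hBA)
    refine (ae_restrict_iff' hA).2 (ae_of_all _ ?_)
    intro ω hω
    simp only [Set.mem_setOf_eq] at hω
    obtain ⟨h0, h1⟩ := hrange ω
    have : 0 ≤ (μ / 2) * (V₀ ω - μ / 2) * (2 - μ / 2 - V₀ ω) := by
      apply mul_nonneg (mul_nonneg (by linarith) (by linarith)) (by linarith)
    simpa [hf] using this
  have step2 : μ ^ 2 / 8 * (P {ω | μ ≤ V₀ ω}).toReal ≤ ∫ ω in {ω | μ ≤ V₀ ω}, f ω ∂P := by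
    have := setIntegral_mono_on (integrable_const (μ ^ 2 / 8)).integrableOn
      hint.integrableOn hB ?_
    · simpa [Measure.restrict_apply_univ, mul_comm, Measure.real] using this
    · intro ω hω
      simp only [Set.mem_setOf_eq] at hω
      obtain ⟨h0, h1⟩ := hrange ω
      simp only [hf]
      have ha : μ / 2 ≤ V₀ ω - μ / 2 := by linarith
      have hb : 1 / 2 ≤ 2 - μ / 2 - V₀ ω := by linarith
      have h2 : (μ / 2) * (1 / 2) ≤ (V₀ ω - μ / 2) * (2 - μ / 2 - V₀ ω) :=
        mul_le_mul ha hb (by linarith) (by linarith)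
      have h3 := mul_le_mul_of_nonneg_left h2 (by linarith : (0 : ℝ) ≤ μ / 2)
      nlinarith [h3]
  rw [← hmono]
  calc μ / 8 * (μ * (P {ω | μ ≤ V₀ ω}).toReal)
      = μ ^ 2 / 8 * (P {ω | μ ≤ V₀ ω}).toReal := by ring
    _ ≤ ∫ ω in {ω | μ ≤ V₀ ω}, f ω ∂P := step2
    _ ≤ _ := step1
end
end

section
/- For every v ∈ S with v > 0, Pr_v[ τ > 2/(3δ²) | V_τ = 1 ] ≤ 1/2; that is, conditioned on reaching 1 before 0, the chain reaches 1 within 2/(3δ²) steps with probability at least 1/2. -/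
open MeasureTheory ProbabilityTheory

noncomputable section

namespace CW

def shift {Ω : Type} (ξ : ℕ → Ω → ℝ) : ℕ → Ω → ℝ := fun i => ξ (i + 1)

section Walk
variable {Ω : Type} [MeasurableSpace Ω]


omit [MeasurableSpace Ω] in
lemma walk_succ (δ : ℝ) (ξ : ℕ → Ω → ℝ) (v : ℝ) (t : ℕ) (ω : Ω) :
    walk δ ξ v (t + 1) ω = if walk δ ξ v t ω = 0 then 0 else if walk δ ξ v t ω = 1 then 1 - δ
      else walk δ ξ v t ω + δ * ξ t ω := rfl

omit [MeasurableSpace Ω] in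
lemma walk_zero_start (δ : ℝ) (ξ : ℕ → Ω → ℝ) (t : ℕ) (ω : Ω) :
    walk δ ξ 0 t ω = 0 := by
  induction t with
  | zero => rfl
  | succ t ih => rw [walk_succ, ih]; simp

omit [MeasurableSpace Ω] in
lemma walk_shift (δ : ℝ) (ξ : ℕ → Ω → ℝ) {v : ℝ} (h0 : v ≠ 0) (h1 : v ≠ 1) (t : ℕ) (ω : Ω) :
    walk δ ξ v (t + 1) ω = walk δ (shift ξ) (v + δ * ξ 0 ω) t ω := by
  induction t with
  | zero => rw [walk_succ]; simp [walk, h0, h1]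
  | succ t ih => rw [walk_succ, ih, walk_succ]; rfl

omit [MeasurableSpace Ω] in
lemma measurable_walk {m : MeasurableSpace Ω} (δ : ℝ) (ξ : ℕ → Ω → ℝ)
    (hξ : ∀ i, Measurable[m] (ξ i)) (v : ℝ) (t : ℕ) : Measurable[m] (walk δ ξ v t) := by
  induction t with
  | zero => exact measurable_const
  | succ t ih =>
      have h0 : MeasurableSet[m] {ω | walk δ ξ v t ω = 0} := ih (measurableSet_singleton 0)
      have h1 : MeasurableSet[m] {ω | walk δ ξ v t ω = 1} := ih (measurableSet_singleton 1)
      have : Measurable[m] (fun ω => if walk δ ξ v t ω = 0 then (0:ℝ)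
          else if walk δ ξ v t ω = 1 then 1 - δ else walk δ ξ v t ω + δ * ξ t ω) := by
        exact Measurable.ite h0 measurable_const
          (Measurable.ite h1 measurable_const (ih.add ((hξ t).const_mul δ)))
      exact this

end Walk

section Coin
variable {Ω : Type} [MeasurableSpace Ω] {P : Measure Ω} {ξ : ℕ → Ω → ℝ}

lemma coin_prob_one (hξ : IsCoinSeq P ξ) (i : ℕ) : P (ξ i ⁻¹' {1}) = 1/2 := by
  have := hξ.2.2 i
  have h : P (ξ i ⁻¹' {1}) = (Measure.map (ξ i) P) {1} := by
    rw [Measure.map_apply (hξ.1 i) (measurableSet_singleton _)]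
  rw [h, this]
  simp [Measure.dirac_apply']
  norm_num

lemma coin_prob_negone (hξ : IsCoinSeq P ξ) (i : ℕ) : P (ξ i ⁻¹' {-1}) = 1/2 := by
  have := hξ.2.2 i
  have h : P (ξ i ⁻¹' {-1}) = (Measure.map (ξ i) P) {-1} := by
    rw [Measure.map_apply (hξ.1 i) (measurableSet_singleton _)]
  rw [h, this]
  simp [Measure.dirac_apply']
  norm_num

lemma coin_null (hξ : IsCoinSeq P ξ) (i : ℕ) : P ((ξ i ⁻¹' {1, -1})ᶜ) = 0 := by
  have h : P ((ξ i ⁻¹' {1, -1})ᶜ) = (Measure.map (ξ i) P) ({1, -1}ᶜ) := by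
    rw [Measure.map_apply (hξ.1 i) (measurableSet_insert.2 (measurableSet_singleton _)).compl]
    rfl
  rw [h, hξ.2.2 i]
  simp [Measure.dirac_apply']

/-- the shifted sequence is again a coin sequence -/
lemma shift_isCoinSeq (hξ : IsCoinSeq P ξ) : IsCoinSeq P (shift ξ) := by
  refine ⟨fun i => hξ.1 (i+1), ?_, fun i => hξ.2.2 (i+1)⟩
  rw [iIndepFun_iff_measure_inter_preimage_eq_mul]
  intro S sets hsets
  have h := hξ.2.1.measure_inter_preimage_eq_mul (S.image (· + 1))
    (sets := fun j => sets (j - 1)) (fun j hj => by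
      simp only [Finset.mem_image] at hj
      obtain ⟨i, hi, rfl⟩ := hj
      simpa using hsets i hi)
  rw [Finset.prod_image (by intro a _ b _ h; exact Nat.succ_injective h)] at h
  have e : (⋂ i ∈ S.image (· + 1), ξ i ⁻¹' sets (i - 1)) = ⋂ i ∈ S, shift ξ i ⁻¹' sets i := by
    ext ω
    simp only [Set.mem_iInter, Finset.mem_image]
    constructor
    · intro h i hi; exact h (i+1) ⟨i, hi, rfl⟩
    · rintro h j ⟨i, hi, rfl⟩; simpa [shift] using h i hi
  rw [e] at h
  simpa [shift] using h

/-- independence of events generated by the tail from the first coin -/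
lemma indep_first (hξ : IsCoinSeq P ξ) {E : Set Ω}
    (hE : MeasurableSet[⨆ i ∈ {i : ℕ | 1 ≤ i}, MeasurableSpace.comap (ξ i) Real.measurableSpace] E)
    {s : Set ℝ} (hs : MeasurableSet s) :
    P (ξ 0 ⁻¹' s ∩ E) = P (ξ 0 ⁻¹' s) * P E := by
  have hle : ∀ i : ℕ, MeasurableSpace.comap (ξ i) Real.measurableSpace ≤ ‹MeasurableSpace Ω› :=
    fun i => (hξ.1 i).comap_le
  have hindep := indep_iSup_of_disjoint (m := fun i => MeasurableSpace.comap (ξ i) Real.measurableSpace)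
    hle hξ.2.1.iIndep (S := {0}) (T := {i : ℕ | 1 ≤ i}) (by
      rw [Set.disjoint_left]; rintro a rfl; simp)
  rw [Indep_iff] at hindep
  refine hindep _ _ ?_ hE
  have : MeasurableSet[MeasurableSpace.comap (ξ 0) Real.measurableSpace] (ξ 0 ⁻¹' s) := ⟨s, hs, rfl⟩
  refine MeasurableSpace.le_def.mp ?_ _ this
  simpa using le_iSup₂ (f := fun (i : ℕ) (_ : i ∈ ({0} : Set ℕ)) =>
    MeasurableSpace.comap (ξ i) Real.measurableSpace) 0 rfl

end Coin

section Events
variable {Ω : Type} [MeasurableSpace Ω]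

/-- first hit of `{0,1}` occurs at time `t` with value `u` -/
def evA (δ : ℝ) (ξ : ℕ → Ω → ℝ) (v u : ℝ) (t : ℕ) : Set Ω :=
  {ω | (∀ s < t, walk δ ξ v s ω ≠ 0 ∧ walk δ ξ v s ω ≠ 1) ∧ walk δ ξ v t ω = u}

/-- no hit of `{0,1}` up to time `T` -/
def evN (δ : ℝ) (ξ : ℕ → Ω → ℝ) (v : ℝ) (T : ℕ) : Set Ω :=
  {ω | ∀ s ≤ T, walk δ ξ v s ω ≠ 0 ∧ walk δ ξ v s ω ≠ 1}

lemma measurableSet_evA {m : MeasurableSpace Ω} (δ : ℝ) {ξ : ℕ → Ω → ℝ}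
    (hξ : ∀ i, Measurable[m] (ξ i)) (v u : ℝ) (t : ℕ) : MeasurableSet[m] (evA δ ξ v u t) := by
  have hw := measurable_walk (m := m) δ ξ hξ v
  have h1 : MeasurableSet[m] {ω | walk δ ξ v t ω = u} := hw t (measurableSet_singleton u)
  have h2 : MeasurableSet[m] {ω | ∀ s < t, walk δ ξ v s ω ≠ 0 ∧ walk δ ξ v s ω ≠ 1} := by
    have : {ω | ∀ s < t, walk δ ξ v s ω ≠ 0 ∧ walk δ ξ v s ω ≠ 1}
        = ⋂ s ∈ Finset.range t, ({ω | walk δ ξ v s ω = 0}ᶜ ∩ {ω | walk δ ξ v s ω = 1}ᶜ) := by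
      ext ω; simp [Finset.mem_range]
    rw [this]
    exact MeasurableSet.biInter (Finset.range t).countable_toSet
      (fun s _ => ((hw s (measurableSet_singleton 0)).compl).inter
        ((hw s (measurableSet_singleton 1)).compl))
  exact h2.inter h1

lemma measurableSet_evN {m : MeasurableSpace Ω} (δ : ℝ) {ξ : ℕ → Ω → ℝ}
    (hξ : ∀ i, Measurable[m] (ξ i)) (v : ℝ) (T : ℕ) : MeasurableSet[m] (evN δ ξ v T) := by
  have hw := measurable_walk (m := m) δ ξ hξ v
  have : evN δ ξ v T
      = ⋂ s ∈ Finset.range (T+1), ({ω | walk δ ξ v s ω = 0}ᶜ ∩ {ω | walk δ ξ v s ω = 1}ᶜ) := by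
    ext ω; simp [evN, Finset.mem_range, Nat.lt_succ_iff]
  rw [this]
  exact MeasurableSet.biInter (Finset.range (T+1)).countable_toSet
    (fun s _ => ((hw s (measurableSet_singleton 0)).compl).inter
      ((hw s (measurableSet_singleton 1)).compl))

/-- pointwise shift identity for `evA` on the fibers of the first coin -/
lemma evA_succ_fiber (δ : ℝ) (ξ : ℕ → Ω → ℝ) {v : ℝ} (h0 : v ≠ 0) (h1 : v ≠ 1)
    (u : ℝ) (t : ℕ) {ω : Ω} {c : ℝ} (hc : ξ 0 ω = c) :
    ω ∈ evA δ ξ v u (t+1) ↔ ω ∈ evA δ (shift ξ) (v + δ * c) u t := by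
  subst hc
  have hws : ∀ s : ℕ, walk δ ξ v (s + 1) ω = walk δ (shift ξ) (v + δ * ξ 0 ω) s ω :=
    fun s => walk_shift δ ξ h0 h1 s ω
  constructor
  · rintro ⟨hall, hend⟩
    refine ⟨fun s hs => ?_, ?_⟩
    · rw [← hws s]; exact hall (s+1) (by omega)
    · rw [← hws t]; exact hend
  · rintro ⟨hall, hend⟩
    refine ⟨fun s hs => ?_, ?_⟩
    · rcases s with _ | r
      · simpa [walk] using ⟨h0, h1⟩
      · rw [hws r]; exact hall r (by omega)
    · rw [hws t]; exact hend

lemma evN_succ_fiber (δ : ℝ) (ξ : ℕ → Ω → ℝ) {v : ℝ} (h0 : v ≠ 0) (h1 : v ≠ 1)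
    (T : ℕ) {ω : Ω} {c : ℝ} (hc : ξ 0 ω = c) :
    ω ∈ evN δ ξ v (T+1) ↔ ω ∈ evN δ (shift ξ) (v + δ * c) T := by
  subst hc
  have hws : ∀ s : ℕ, walk δ ξ v (s + 1) ω = walk δ (shift ξ) (v + δ * ξ 0 ω) s ω :=
    fun s => walk_shift δ ξ h0 h1 s ω
  constructor
  · intro hall s hs
    rw [← hws s]; exact hall (s+1) (by omega)
  · intro hall s hs
    rcases s with _ | r
    · simpa [walk] using ⟨h0, h1⟩
    · rw [hws r]; exact hall r (by omega)

/-- the general splitting principle -/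
lemma measure_split {P : Measure Ω} [IsProbabilityMeasure P] {ξ : ℕ → Ω → ℝ}
    (hξ : IsCoinSeq P ξ) {E E₁ E₂ : Set Ω}
    (hfib1 : ∀ ω, ξ 0 ω = 1 → (ω ∈ E ↔ ω ∈ E₁))
    (hfib2 : ∀ ω, ξ 0 ω = -1 → (ω ∈ E ↔ ω ∈ E₂))
    (hE : MeasurableSet E)
    (hE₁ : MeasurableSet[⨆ i ∈ {i : ℕ | 1 ≤ i}, MeasurableSpace.comap (ξ i) Real.measurableSpace] E₁)
    (hE₂ : MeasurableSet[⨆ i ∈ {i : ℕ | 1 ≤ i}, MeasurableSpace.comap (ξ i) Real.measurableSpace] E₂) :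
    P E = 1/2 * P E₁ + 1/2 * P E₂ := by
  have hU : MeasurableSet (ξ 0 ⁻¹' {1, -1}) :=
    (hξ.1 0) (measurableSet_insert.2 (measurableSet_singleton _))
  have hsplit : P E = P (E ∩ ξ 0 ⁻¹' {1}) + P (E ∩ ξ 0 ⁻¹' {-1}) := by
    have h2 : P (E ∩ ξ 0 ⁻¹' {1, -1}) + P (E \ ξ 0 ⁻¹' {1, -1}) = P E :=
      measure_inter_add_diff E hU
    have h3 : P (E \ ξ 0 ⁻¹' {1, -1}) = 0 :=
      measure_mono_null (fun ω hω => hω.2) (coin_null hξ 0)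
    have h4 : E ∩ ξ 0 ⁻¹' {1, -1} = (E ∩ ξ 0 ⁻¹' {1}) ∪ (E ∩ ξ 0 ⁻¹' {-1}) := by
      ext ω; simp only [Set.mem_inter_iff, Set.mem_preimage, Set.mem_insert_iff,
        Set.mem_singleton_iff, Set.mem_union]
      tauto
    have h5 : P (E ∩ ξ 0 ⁻¹' {1, -1}) = P (E ∩ ξ 0 ⁻¹' {1}) + P (E ∩ ξ 0 ⁻¹' {-1}) := by
      rw [h4]
      refine measure_union ?_ (hE.inter ((hξ.1 0) (measurableSet_singleton _)))
      rw [Set.disjoint_left]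
      rintro ω ⟨-, h1⟩ ⟨-, h2⟩
      simp only [Set.mem_preimage, Set.mem_singleton_iff] at h1 h2
      rw [h1] at h2; norm_num at h2
    rw [← h2, h3, h5, add_zero]
  have e1 : E ∩ ξ 0 ⁻¹' {1} = ξ 0 ⁻¹' {1} ∩ E₁ := by
    ext ω
    simp only [Set.mem_inter_iff, Set.mem_preimage, Set.mem_singleton_iff]
    constructor
    · rintro ⟨hω, hc⟩; exact ⟨hc, (hfib1 ω hc).1 hω⟩
    · rintro ⟨hc, hω⟩; exact ⟨(hfib1 ω hc).2 hω, hc⟩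
  have e2 : E ∩ ξ 0 ⁻¹' {-1} = ξ 0 ⁻¹' {-1} ∩ E₂ := by
    ext ω
    simp only [Set.mem_inter_iff, Set.mem_preimage, Set.mem_singleton_iff]
    constructor
    · rintro ⟨hω, hc⟩; exact ⟨hc, (hfib2 ω hc).1 hω⟩
    · rintro ⟨hc, hω⟩; exact ⟨(hfib2 ω hc).2 hω, hc⟩
  rw [hsplit, e1, e2, indep_first hξ hE₁ (measurableSet_singleton _),
    indep_first hξ hE₂ (measurableSet_singleton _), coin_prob_one hξ 0, coin_prob_negone hξ 0]


end Events


section Step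
variable {Ω : Type} [MeasurableSpace Ω] {P : Measure Ω} [IsProbabilityMeasure P]
  {ξ : ℕ → Ω → ℝ}

lemma tail_meas (hξ : IsCoinSeq P ξ) :
    ∀ i, Measurable[⨆ i ∈ {i : ℕ | 1 ≤ i}, MeasurableSpace.comap (ξ i) Real.measurableSpace]
      (shift ξ i) := by
  intro i
  refine Measurable.of_comap_le ?_
  exact le_iSup₂ (f := fun (j : ℕ) (_ : j ∈ {i : ℕ | 1 ≤ i}) =>
    MeasurableSpace.comap (ξ j) Real.measurableSpace) (i+1) (by simp)

lemma step_evA (hξ : IsCoinSeq P ξ) {δ v : ℝ} (h0 : v ≠ 0) (h1 : v ≠ 1) (u : ℝ) (t : ℕ) :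
    P (evA δ ξ v u (t+1))
      = 1/2 * P (evA δ (shift ξ) (v + δ * 1) u t) + 1/2 * P (evA δ (shift ξ) (v + δ * (-1)) u t) := by
  refine measure_split hξ (fun ω hc => evA_succ_fiber δ ξ h0 h1 u t hc)
    (fun ω hc => evA_succ_fiber δ ξ h0 h1 u t hc)
    (measurableSet_evA δ hξ.1 v u (t+1))
    (measurableSet_evA δ (tail_meas hξ) _ u t)
    (measurableSet_evA δ (tail_meas hξ) _ u t)

lemma step_evN (hξ : IsCoinSeq P ξ) {δ v : ℝ} (h0 : v ≠ 0) (h1 : v ≠ 1) (T : ℕ) :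
    P (evN δ ξ v (T+1))
      = 1/2 * P (evN δ (shift ξ) (v + δ * 1) T) + 1/2 * P (evN δ (shift ξ) (v + δ * (-1)) T) := by
  refine measure_split hξ (fun ω hc => evN_succ_fiber δ ξ h0 h1 T hc)
    (fun ω hc => evN_succ_fiber δ ξ h0 h1 T hc)
    (measurableSet_evN δ hξ.1 v (T+1))
    (measurableSet_evN δ (tail_meas hξ) _ T)
    (measurableSet_evN δ (tail_meas hξ) _ T)

end Step

section BoundaryEvents
variable {Ω : Type} [MeasurableSpace Ω]

omit [MeasurableSpace Ω] in
lemma evA_zero_eq_univ (δ : ℝ) (ξ : ℕ → Ω → ℝ) {v u : ℝ} (h : v = u) :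
    evA δ ξ v u 0 = Set.univ := by
  ext ω; simp [evA, walk, h]

omit [MeasurableSpace Ω] in
lemma evA_zero_eq_empty (δ : ℝ) (ξ : ℕ → Ω → ℝ) {v u : ℝ} (h : v ≠ u) :
    evA δ ξ v u 0 = ∅ := by
  ext ω; simp [evA, walk, h]

omit [MeasurableSpace Ω] in
lemma evA_succ_bdry (δ : ℝ) (ξ : ℕ → Ω → ℝ) {v : ℝ} (h : v = 0 ∨ v = 1) (u : ℝ) (t : ℕ) :
    evA δ ξ v u (t+1) = ∅ := by
  ext ω
  simp only [evA, Set.mem_setOf_eq, Set.mem_empty_iff_false, iff_false, not_and]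
  intro hall
  have := hall 0 (by omega)
  simp only [walk] at this
  tauto

omit [MeasurableSpace Ω] in
lemma evN_bdry (δ : ℝ) (ξ : ℕ → Ω → ℝ) {v : ℝ} (h : v = 0 ∨ v = 1) (T : ℕ) :
    evN δ ξ v T = ∅ := by
  ext ω
  simp only [evN, Set.mem_setOf_eq, Set.mem_empty_iff_false, iff_false, not_forall]
  refine ⟨0, by simp [walk]; tauto⟩

omit [MeasurableSpace Ω] in
lemma evN_zero_int (δ : ℝ) (ξ : ℕ → Ω → ℝ) {v : ℝ} (h0 : v ≠ 0) (h1 : v ≠ 1) :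
    evN δ ξ v 0 = Set.univ := by
  ext ω
  simp only [evN, Set.mem_setOf_eq, Set.mem_univ, iff_true]
  intro s hs
  interval_cases s
  exact ⟨by simpa [walk] using h0, by simpa [walk] using h1⟩

end BoundaryEvents

section Arith

lemma half_ennreal : (1/2 : ENNReal) = ENNReal.ofReal (1/2) := by
  rw [ENNReal.ofReal_div_of_pos (by norm_num)]
  norm_num

lemma half_half_le {x y z : ℝ} (hx : 0 ≤ x) (hy : 0 ≤ y) (hz : (x + y)/2 ≤ z) :
    (1/2 : ENNReal) * ENNReal.ofReal x + 1/2 * ENNReal.ofReal y ≤ ENNReal.ofReal z := by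
  rw [half_ennreal, ← ENNReal.ofReal_mul (by norm_num), ← ENNReal.ofReal_mul (by norm_num),
    ← ENNReal.ofReal_add (by positivity) (by positivity)]
  exact ENNReal.ofReal_le_ofReal (by linarith)

lemma one_add_half_half_le {x y z : ℝ} (hx : 0 ≤ x) (hy : 0 ≤ y) (hz : 1 + (x + y)/2 ≤ z) :
    1 + ((1/2 : ENNReal) * ENNReal.ofReal x + 1/2 * ENNReal.ofReal y) ≤ ENNReal.ofReal z := by
  rw [half_ennreal, ← ENNReal.ofReal_mul (by norm_num), ← ENNReal.ofReal_mul (by norm_num),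
    ← ENNReal.ofReal_add (by positivity) (by positivity),
    show (1 : ENNReal) = ENNReal.ofReal 1 by simp,
    ← ENNReal.ofReal_add (by norm_num) (by positivity)]
  exact ENNReal.ofReal_le_ofReal (by linarith)

end Arith

section Casts

lemma cast_plus {n : ℕ} (hn : 0 < n) (k : ℕ) :
    (k:ℝ)/n + (1/n)*1 = ((k+1:ℕ):ℝ)/n := by
  have : (n:ℝ) ≠ 0 := Nat.cast_ne_zero.2 hn.ne'
  push_cast
  field_simp

lemma cast_minus {n : ℕ} (hn : 0 < n) {k : ℕ} (hk : 1 ≤ k) :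
    (k:ℝ)/n + (1/n)*(-1) = ((k-1:ℕ):ℝ)/n := by
  have : (n:ℝ) ≠ 0 := Nat.cast_ne_zero.2 hn.ne'
  rw [Nat.cast_sub hk]
  push_cast
  field_simp
  ring

lemma interior_ne_zero {n k : ℕ} (hn : 0 < n) (hk1 : 1 ≤ k) : ((k:ℝ)/n) ≠ 0 := by
  have h1 : (0:ℝ) < k := by exact_mod_cast hk1
  have h2 : (0:ℝ) < n := by exact_mod_cast hn
  positivity

lemma interior_ne_one {n k : ℕ} (hn : 0 < n) (hkn : k < n) : ((k:ℝ)/n) ≠ 1 := by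
  have h1 : (k:ℝ) < n := by exact_mod_cast hkn
  have h2 : (0:ℝ) < n := by exact_mod_cast hn
  exact ne_of_lt (by rw [div_lt_one h2]; exact h1)

lemma self_div_self_nat {n : ℕ} (hn : 0 < n) : ((n:ℕ):ℝ)/n = 1 :=
  div_self (Nat.cast_ne_zero.2 hn.ne')

end Casts

section MainInduction
variable {Ω : Type}

lemma evA_start_zero {Ω : Type} (δ : ℝ) (ξ : ℕ → Ω → ℝ) {u : ℝ} (hu : u ≠ 0) (t : ℕ) :
    evA δ ξ 0 u t = ∅ := by
  cases t with
  | zero => exact evA_zero_eq_empty δ ξ (fun h => hu h.symm)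
  | succ t => exact evA_succ_bdry δ ξ (Or.inl rfl) u t

/-- partial sums of hit-`1` probabilities are at most `k/n` -/
lemma bound_b (n : ℕ) (hn : 0 < n) :
    ∀ T : ℕ, ∀ (Ω : Type) (mΩ : MeasurableSpace Ω) (P : Measure Ω) (_ : IsProbabilityMeasure P)
      (ξ : ℕ → Ω → ℝ) (_ : IsCoinSeq P ξ) (k : ℕ) (_ : k ≤ n),
      ∑ t ∈ Finset.range (T+1), P (evA (1/(n:ℝ)) ξ ((k:ℝ)/n) 1 t)
        ≤ ENNReal.ofReal ((k:ℝ)/n) := by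
  intro T
  induction T with
  | zero =>
      intro Ω mΩ P hP ξ hξ k hk
      rw [Finset.sum_range_one]
      by_cases hkn : k = n
      · have hv1 : (k:ℝ)/n = 1 := by rw [hkn]; exact self_div_self_nat hn
        rw [evA_zero_eq_univ _ _ hv1, measure_univ, hv1]
        simp
      · rw [evA_zero_eq_empty _ _ (interior_ne_one hn (lt_of_le_of_ne hk hkn)), measure_empty]
        exact zero_le
  | succ T ih =>
      intro Ω mΩ P hP ξ hξ k hk
      by_cases hkn : k = n
      · have hv1 : (k:ℝ)/n = 1 := by rw [hkn]; exact self_div_self_nat hn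
        rw [Finset.sum_range_succ']
        have hz : ∀ t ∈ Finset.range (T+1),
            P (evA (1/(n:ℝ)) ξ ((k:ℝ)/n) 1 (t+1)) = 0 := by
          intro t _
          rw [hv1, evA_succ_bdry _ _ (Or.inr rfl), measure_empty]
        rw [Finset.sum_congr rfl hz, Finset.sum_const_zero, zero_add,
          evA_zero_eq_univ _ _ hv1, measure_univ, hv1]
        simp
      have hklt : k < n := lt_of_le_of_ne hk hkn
      by_cases hk0 : k = 0
      · subst hk0
        have hz : ∀ t ∈ Finset.range (T+2),
            P (evA (1/(n:ℝ)) ξ (((0:ℕ):ℝ)/n) 1 t) = 0 := by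
          intro t _
          rw [show (((0:ℕ):ℝ)/n) = 0 by simp, evA_start_zero _ _ (by norm_num), measure_empty]
        rw [Finset.sum_congr rfl hz, Finset.sum_const_zero]
        exact zero_le
      have hk1 : 1 ≤ k := Nat.one_le_iff_ne_zero.2 hk0
      have hv0 := interior_ne_zero hn hk1 (n := n) (k := k)
      have hv1 := interior_ne_one hn hklt (n := n) (k := k)
      rw [Finset.sum_range_succ', evA_zero_eq_empty _ _ hv1, measure_empty, add_zero]
      have hstep : ∀ t ∈ Finset.range (T+1),
          P (evA (1/(n:ℝ)) ξ ((k:ℝ)/n) 1 (t+1))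
            = 1/2 * P (evA (1/(n:ℝ)) (shift ξ) (((k+1:ℕ):ℝ)/n) 1 t)
              + 1/2 * P (evA (1/(n:ℝ)) (shift ξ) (((k-1:ℕ):ℝ)/n) 1 t) := by
        intro t _
        rw [step_evA hξ hv0 hv1, cast_plus hn, cast_minus hn hk1]
      rw [Finset.sum_congr rfl hstep, Finset.sum_add_distrib, ← Finset.mul_sum, ← Finset.mul_sum]
      have hPlus := ih Ω mΩ P hP (shift ξ) (shift_isCoinSeq hξ) (k+1) (by omega)
      have hMinus := ih Ω mΩ P hP (shift ξ) (shift_isCoinSeq hξ) (k-1) (by omega)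
      calc 1/2 * (∑ t ∈ Finset.range (T+1), P (evA (1/(n:ℝ)) (shift ξ) (((k+1:ℕ):ℝ)/n) 1 t))
            + 1/2 * (∑ t ∈ Finset.range (T+1), P (evA (1/(n:ℝ)) (shift ξ) (((k-1:ℕ):ℝ)/n) 1 t))
          ≤ 1/2 * ENNReal.ofReal (((k+1:ℕ):ℝ)/n) + 1/2 * ENNReal.ofReal (((k-1:ℕ):ℝ)/n) := by
            exact add_le_add (mul_le_mul_right hPlus _) (mul_le_mul_right hMinus _)
        _ ≤ ENNReal.ofReal ((k:ℝ)/n) := by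
            refine half_half_le (by positivity) (by positivity) ?_
            have hnr : (0:ℝ) < n := by exact_mod_cast hn
            rw [Nat.cast_sub hk1]
            push_cast
            rw [← add_div]
            rw [div_div]
            rw [div_le_div_iff₀ (by positivity) (by positivity)]
            ring_nf
            nlinarith [hnr]

/-- partial sums of hit-`0` probabilities are at most `(n-k)/n` -/
lemma bound_c (n : ℕ) (hn : 0 < n) :
    ∀ T : ℕ, ∀ (Ω : Type) (mΩ : MeasurableSpace Ω) (P : Measure Ω) (_ : IsProbabilityMeasure P)
      (ξ : ℕ → Ω → ℝ) (_ : IsCoinSeq P ξ) (k : ℕ) (_ : k ≤ n),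
      ∑ t ∈ Finset.range (T+1), P (evA (1/(n:ℝ)) ξ ((k:ℝ)/n) 0 t)
        ≤ ENNReal.ofReal (((n-k:ℕ):ℝ)/n) := by
  intro T
  induction T with
  | zero =>
      intro Ω mΩ P hP ξ hξ k hk
      rw [Finset.sum_range_one]
      by_cases hk0 : k = 0
      · subst hk0
        rw [evA_zero_eq_univ _ _ (by simp), measure_univ]
        rw [show ((n-0:ℕ):ℝ)/n = 1 by simpa using self_div_self_nat hn]
        simp
      · rw [evA_zero_eq_empty _ _ (interior_ne_zero hn (Nat.one_le_iff_ne_zero.2 hk0)),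
          measure_empty]
        exact zero_le
  | succ T ih =>
      intro Ω mΩ P hP ξ hξ k hk
      by_cases hk0 : k = 0
      · subst hk0
        rw [Finset.sum_range_succ']
        have hz : ∀ t ∈ Finset.range (T+1),
            P (evA (1/(n:ℝ)) ξ (((0:ℕ):ℝ)/n) 0 (t+1)) = 0 := by
          intro t _
          rw [show (((0:ℕ):ℝ)/n) = 0 by simp, evA_succ_bdry _ _ (Or.inl rfl), measure_empty]
        rw [Finset.sum_congr rfl hz, Finset.sum_const_zero, zero_add,
          evA_zero_eq_univ _ _ (by simp), measure_univ,
          show ((n-0:ℕ):ℝ)/n = 1 by simpa using self_div_self_nat hn]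
        simp
      have hk1 : 1 ≤ k := Nat.one_le_iff_ne_zero.2 hk0
      by_cases hkn : k = n
      · have hv1 : (k:ℝ)/n = 1 := by rw [hkn]; exact self_div_self_nat hn
        have hz : ∀ t ∈ Finset.range (T+2),
            P (evA (1/(n:ℝ)) ξ ((k:ℝ)/n) 0 t) = 0 := by
          intro t _
          cases t with
          | zero =>
              rw [evA_zero_eq_empty _ _ (by rw [hv1]; norm_num), measure_empty]
          | succ t =>
              rw [hv1, evA_succ_bdry _ _ (Or.inr rfl), measure_empty]
        rw [Finset.sum_congr rfl hz, Finset.sum_const_zero]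
        exact zero_le
      have hklt : k < n := lt_of_le_of_ne hk hkn
      have hv0 := interior_ne_zero hn hk1 (n := n) (k := k)
      have hv1 := interior_ne_one hn hklt (n := n) (k := k)
      rw [Finset.sum_range_succ', evA_zero_eq_empty _ _ hv0, measure_empty, add_zero]
      have hstep : ∀ t ∈ Finset.range (T+1),
          P (evA (1/(n:ℝ)) ξ ((k:ℝ)/n) 0 (t+1))
            = 1/2 * P (evA (1/(n:ℝ)) (shift ξ) (((k+1:ℕ):ℝ)/n) 0 t)
              + 1/2 * P (evA (1/(n:ℝ)) (shift ξ) (((k-1:ℕ):ℝ)/n) 0 t) := by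
        intro t _
        rw [step_evA hξ hv0 hv1, cast_plus hn, cast_minus hn hk1]
      rw [Finset.sum_congr rfl hstep, Finset.sum_add_distrib, ← Finset.mul_sum, ← Finset.mul_sum]
      have hPlus := ih Ω mΩ P hP (shift ξ) (shift_isCoinSeq hξ) (k+1) (by omega)
      have hMinus := ih Ω mΩ P hP (shift ξ) (shift_isCoinSeq hξ) (k-1) (by omega)
      refine le_trans (add_le_add (mul_le_mul_right hPlus _) (mul_le_mul_right hMinus _)) ?_
      refine half_half_le (by positivity) (by positivity) ?_
      have hnr : (0:ℝ) < n := by exact_mod_cast hn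
      have hne : (n:ℝ) ≠ 0 := ne_of_gt hnr
      have e2 : ((n-(k+1):ℕ):ℝ) = (n:ℝ) - (k:ℝ) - 1 := by
        rw [Nat.cast_sub (by omega)]; push_cast; ring
      have e3 : ((n-(k-1):ℕ):ℝ) = (n:ℝ) - (k:ℝ) + 1 := by
        rw [Nat.cast_sub (by omega), Nat.cast_sub hk1]; push_cast; ring
      have e4 : ((n-k:ℕ):ℝ) = (n:ℝ) - (k:ℝ) := by rw [Nat.cast_sub hk]
      rw [e2, e3, e4]
      exact le_of_eq (by field_simp; ring)

/-- partial sums of the no-hit probabilities are at most `k(n-k)` -/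
lemma bound_w (n : ℕ) (hn : 0 < n) :
    ∀ T : ℕ, ∀ (Ω : Type) (mΩ : MeasurableSpace Ω) (P : Measure Ω) (_ : IsProbabilityMeasure P)
      (ξ : ℕ → Ω → ℝ) (_ : IsCoinSeq P ξ) (k : ℕ) (_ : k ≤ n),
      ∑ s ∈ Finset.range T, P (evN (1/(n:ℝ)) ξ ((k:ℝ)/n) s)
        ≤ ENNReal.ofReal ((k:ℝ) * ((n:ℝ) - (k:ℝ))) := by
  intro T
  induction T with
  | zero =>
      intro Ω mΩ P hP ξ hξ k hk
      simp
  | succ T ih =>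
      intro Ω mΩ P hP ξ hξ k hk
      by_cases hk0 : k = 0
      · subst hk0
        have hz : ∀ s ∈ Finset.range (T+1),
            P (evN (1/(n:ℝ)) ξ (((0:ℕ):ℝ)/n) s) = 0 := by
          intro s _
          rw [show (((0:ℕ):ℝ)/n) = 0 by simp, evN_bdry _ _ (Or.inl rfl), measure_empty]
        rw [Finset.sum_congr rfl hz, Finset.sum_const_zero]
        exact zero_le
      have hk1 : 1 ≤ k := Nat.one_le_iff_ne_zero.2 hk0
      by_cases hkn : k = n
      · have hv1 : (k:ℝ)/n = 1 := by rw [hkn]; exact self_div_self_nat hn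
        have hz : ∀ s ∈ Finset.range (T+1),
            P (evN (1/(n:ℝ)) ξ ((k:ℝ)/n) s) = 0 := by
          intro s _
          rw [hv1, evN_bdry _ _ (Or.inr rfl), measure_empty]
        rw [Finset.sum_congr rfl hz, Finset.sum_const_zero]
        exact zero_le
      have hklt : k < n := lt_of_le_of_ne hk hkn
      have hv0 := interior_ne_zero hn hk1 (n := n) (k := k)
      have hv1 := interior_ne_one hn hklt (n := n) (k := k)
      rw [Finset.sum_range_succ', evN_zero_int _ _ hv0 hv1, measure_univ]
      have hstep : ∀ s ∈ Finset.range T,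
          P (evN (1/(n:ℝ)) ξ ((k:ℝ)/n) (s+1))
            = 1/2 * P (evN (1/(n:ℝ)) (shift ξ) (((k+1:ℕ):ℝ)/n) s)
              + 1/2 * P (evN (1/(n:ℝ)) (shift ξ) (((k-1:ℕ):ℝ)/n) s) := by
        intro s _
        rw [step_evN hξ hv0 hv1, cast_plus hn, cast_minus hn hk1]
      rw [Finset.sum_congr rfl hstep, Finset.sum_add_distrib, ← Finset.mul_sum, ← Finset.mul_sum]
      have hPlus := ih Ω mΩ P hP (shift ξ) (shift_isCoinSeq hξ) (k+1) (by omega)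
      have hMinus := ih Ω mΩ P hP (shift ξ) (shift_isCoinSeq hξ) (k-1) (by omega)
      rw [add_comm]
      refine le_trans (add_le_add_right (add_le_add (mul_le_mul_right hPlus _)
        (mul_le_mul_right hMinus _)) 1) ?_
      refine one_add_half_half_le ?_ ?_ ?_
      · have h1 : ((k+1:ℕ):ℝ) ≤ n := by exact_mod_cast hklt
        nlinarith [h1, (by positivity : (0:ℝ) ≤ ((k+1:ℕ):ℝ))]
      · have h1 : ((k-1:ℕ):ℝ) ≤ n := by exact_mod_cast (by omega : k - 1 ≤ n)
        nlinarith [h1, (by positivity : (0:ℝ) ≤ ((k-1:ℕ):ℝ))]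
      · have hnr : (0:ℝ) < n := by exact_mod_cast hn
        have hkr : (1:ℝ) ≤ k := by exact_mod_cast hk1
        rw [Nat.cast_sub hk1]
        push_cast
        nlinarith [hnr, hkr]

/-- time-weighted sums of hit-`1` probabilities are at most `k(n²-k²)/(3n)` -/
lemma bound_a (n : ℕ) (hn : 0 < n) :
    ∀ T : ℕ, ∀ (Ω : Type) (mΩ : MeasurableSpace Ω) (P : Measure Ω) (_ : IsProbabilityMeasure P)
      (ξ : ℕ → Ω → ℝ) (_ : IsCoinSeq P ξ) (k : ℕ) (_ : k ≤ n),
      ∑ t ∈ Finset.range (T+1), (t : ENNReal) * P (evA (1/(n:ℝ)) ξ ((k:ℝ)/n) 1 t)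
        ≤ ENNReal.ofReal ((k:ℝ) * ((n:ℝ)^2 - (k:ℝ)^2) / (3*(n:ℝ))) := by
  intro T
  induction T with
  | zero =>
      intro Ω mΩ P hP ξ hξ k hk
      simp
  | succ T ih =>
      intro Ω mΩ P hP ξ hξ k hk
      by_cases hk0 : k = 0
      · subst hk0
        have hz : ∀ t ∈ Finset.range (T+2),
            (t : ENNReal) * P (evA (1/(n:ℝ)) ξ (((0:ℕ):ℝ)/n) 1 t) = 0 := by
          intro t _
          rw [show (((0:ℕ):ℝ)/n) = 0 by simp, evA_start_zero _ _ (by norm_num), measure_empty,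
            mul_zero]
        rw [Finset.sum_congr rfl hz, Finset.sum_const_zero]
        exact zero_le
      have hk1 : 1 ≤ k := Nat.one_le_iff_ne_zero.2 hk0
      by_cases hkn : k = n
      · have hv1 : (k:ℝ)/n = 1 := by rw [hkn]; exact self_div_self_nat hn
        have hz : ∀ t ∈ Finset.range (T+2),
            (t : ENNReal) * P (evA (1/(n:ℝ)) ξ ((k:ℝ)/n) 1 t) = 0 := by
          intro t _
          cases t with
          | zero => simp
          | succ t =>
              rw [hv1, evA_succ_bdry _ _ (Or.inr rfl), measure_empty, mul_zero]
        rw [Finset.sum_congr rfl hz, Finset.sum_const_zero]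
        exact zero_le
      have hklt : k < n := lt_of_le_of_ne hk hkn
      have hv0 := interior_ne_zero hn hk1 (n := n) (k := k)
      have hv1 := interior_ne_one hn hklt (n := n) (k := k)
      rw [Finset.sum_range_succ']
      rw [show ((0:ℕ) : ENNReal) * P (evA (1/(n:ℝ)) ξ ((k:ℝ)/n) 1 0) = 0 by simp, add_zero]
      have hstep : ∀ t ∈ Finset.range (T+1),
          ((t+1 : ℕ) : ENNReal) * P (evA (1/(n:ℝ)) ξ ((k:ℝ)/n) 1 (t+1))
            = (1/2 * ((t : ENNReal) * P (evA (1/(n:ℝ)) (shift ξ) (((k+1:ℕ):ℝ)/n) 1 t))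
                + 1/2 * ((t : ENNReal) * P (evA (1/(n:ℝ)) (shift ξ) (((k-1:ℕ):ℝ)/n) 1 t)))
              + (1/2 * P (evA (1/(n:ℝ)) (shift ξ) (((k+1:ℕ):ℝ)/n) 1 t)
                + 1/2 * P (evA (1/(n:ℝ)) (shift ξ) (((k-1:ℕ):ℝ)/n) 1 t)) := by
        intro t _
        rw [step_evA hξ hv0 hv1, cast_plus hn, cast_minus hn hk1]
        push_cast
        ring
      rw [Finset.sum_congr rfl hstep, Finset.sum_add_distrib, Finset.sum_add_distrib,
        Finset.sum_add_distrib, ← Finset.mul_sum, ← Finset.mul_sum, ← Finset.mul_sum,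
        ← Finset.mul_sum]
      have haP := ih Ω mΩ P hP (shift ξ) (shift_isCoinSeq hξ) (k+1) (by omega)
      have haM := ih Ω mΩ P hP (shift ξ) (shift_isCoinSeq hξ) (k-1) (by omega)
      have hbP := bound_b n hn T Ω mΩ P hP (shift ξ) (shift_isCoinSeq hξ) (k+1) (by omega)
      have hbM := bound_b n hn T Ω mΩ P hP (shift ξ) (shift_isCoinSeq hξ) (k-1) (by omega)
      have hnr : (0:ℝ) < n := by exact_mod_cast hn
      have hkp : ((k+1:ℕ):ℝ) ≤ n := by exact_mod_cast hklt
      have hkm : ((k-1:ℕ):ℝ) ≤ n := by exact_mod_cast (by omega : k - 1 ≤ n)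
      have key : ∀ (j : ℕ), (j:ℝ) ≤ n → 0 ≤ (j:ℝ) * ((n:ℝ)^2 - (j:ℝ)^2) / (3*(n:ℝ)) := by
        intro j hj
        have h1 : (0:ℝ) ≤ (j:ℝ) := by positivity
        have h2 : (0:ℝ) ≤ (n:ℝ)^2 - (j:ℝ)^2 := by nlinarith
        have h3 : (0:ℝ) ≤ 3*(n:ℝ) := by positivity
        exact div_nonneg (mul_nonneg h1 h2) h3
      calc (1/2 * ∑ t ∈ Finset.range (T+1),
              (t : ENNReal) * P (evA (1/(n:ℝ)) (shift ξ) (((k+1:ℕ):ℝ)/n) 1 t)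
            + 1/2 * ∑ t ∈ Finset.range (T+1),
              (t : ENNReal) * P (evA (1/(n:ℝ)) (shift ξ) (((k-1:ℕ):ℝ)/n) 1 t))
            + (1/2 * ∑ t ∈ Finset.range (T+1), P (evA (1/(n:ℝ)) (shift ξ) (((k+1:ℕ):ℝ)/n) 1 t)
            + 1/2 * ∑ t ∈ Finset.range (T+1), P (evA (1/(n:ℝ)) (shift ξ) (((k-1:ℕ):ℝ)/n) 1 t))
          ≤ (1/2 * ENNReal.ofReal ((k+1:ℕ) * ((n:ℝ)^2 - ((k+1:ℕ):ℝ)^2) / (3*(n:ℝ)))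
              + 1/2 * ENNReal.ofReal ((k-1:ℕ) * ((n:ℝ)^2 - ((k-1:ℕ):ℝ)^2) / (3*(n:ℝ))))
            + (1/2 * ENNReal.ofReal (((k+1:ℕ):ℝ)/n) + 1/2 * ENNReal.ofReal (((k-1:ℕ):ℝ)/n)) := by
            exact add_le_add (add_le_add (mul_le_mul_right haP _) (mul_le_mul_right haM _))
              (add_le_add (mul_le_mul_right hbP _) (mul_le_mul_right hbM _))
        _ ≤ ENNReal.ofReal ((k:ℝ) * ((n:ℝ)^2 - (k:ℝ)^2) / (3*(n:ℝ)) - (k:ℝ)/n)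
            + ENNReal.ofReal ((k:ℝ)/n) := by
            refine add_le_add ?_ ?_
            · refine half_half_le (key _ hkp) (key _ hkm) ?_
              have hne : (n:ℝ) ≠ 0 := ne_of_gt hnr
              rw [Nat.cast_sub hk1]
              push_cast
              exact le_of_eq (by field_simp; ring)
            · refine half_half_le (by positivity) (by positivity) ?_
              rw [Nat.cast_sub hk1]
              push_cast
              rw [← add_div, div_div, div_le_div_iff₀ (by positivity) (by positivity)]
              nlinarith [hnr]
        _ ≤ ENNReal.ofReal ((k:ℝ) * ((n:ℝ)^2 - (k:ℝ)^2) / (3*(n:ℝ))) := by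
            rw [← ENNReal.ofReal_add ?_ (by positivity)]
            · exact ENNReal.ofReal_le_ofReal (by linarith)
            · have hkk : (k:ℝ) ≤ n := by exact_mod_cast hk
              have hkpos : (1:ℝ) ≤ (k:ℝ) := by exact_mod_cast hk1
              rw [sub_nonneg, div_le_div_iff₀ (by positivity) (by positivity)]
              have h5 : (k:ℝ) + 1 ≤ (n:ℝ) := by exact_mod_cast hklt
              have h6 : (3:ℝ) ≤ (n:ℝ)^2 - (k:ℝ)^2 := by
                nlinarith [mul_nonneg (by linarith : (0:ℝ) ≤ (n:ℝ) - ((k:ℝ)+1))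
                  (by linarith : (0:ℝ) ≤ (n:ℝ) + ((k:ℝ)+1)), hkpos]
              nlinarith [h6, hkpos, hnr, mul_pos hnr (lt_of_lt_of_le one_pos hkpos)]

end MainInduction

section Glue
variable {Ω : Type}

/-- if the chain is at `1` at the hitting time, the hitting-time event `evA` holds -/
lemma hit_mem_evA {δ v : ℝ} {ξ : ℕ → Ω → ℝ} {ω : Ω}
    (h1 : walk δ ξ v (hitTime01 (walk δ ξ v) ω) ω = 1) :
    ω ∈ evA δ ξ v 1 (hitTime01 (walk δ ξ v) ω) := by
  refine ⟨fun s hs => ?_, h1⟩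
  have hns : s ∉ {t | walk δ ξ v t ω = 0 ∨ walk δ ξ v t ω = 1} := Nat.notMem_of_lt_sInf hs
  simp only [Set.mem_setOf_eq, not_or] at hns
  exact hns

lemma evA_subset_hit1 (δ : ℝ) (ξ : ℕ → Ω → ℝ) (v : ℝ) (t : ℕ) :
    evA δ ξ v 1 t ⊆ {ω | walk δ ξ v (hitTime01 (walk δ ξ v) ω) ω = 1} := by
  rintro ω ⟨hall, hend⟩
  have hmem : t ∈ {s | walk δ ξ v s ω = 0 ∨ walk δ ξ v s ω = 1} := Or.inr hend
  have hτ : hitTime01 (walk δ ξ v) ω = t := by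
    refine le_antisymm (Nat.sInf_le hmem) ?_
    by_contra hlt
    push_neg at hlt
    have hmem' := Nat.sInf_mem ⟨t, hmem⟩
    rcases hmem' with h | h
    · exact (hall _ hlt).1 h
    · exact (hall _ hlt).2 h
  simp only [Set.mem_setOf_eq, hτ, hend]

lemma evA_disj (δ : ℝ) (ξ : ℕ → Ω → ℝ) (v : ℝ) {t t' : ℕ} (h : t ≠ t') :
    Disjoint (evA δ ξ v 1 t) (evA δ ξ v 1 t') := by
  rw [Set.disjoint_left]
  rintro ω ⟨hall, hend⟩ ⟨hall', hend'⟩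
  rcases lt_or_gt_of_ne h with hlt | hlt
  · exact (hall' t hlt).2 hend
  · exact (hall t' hlt).2 hend'

lemma cover_univ (δ : ℝ) (ξ : ℕ → Ω → ℝ) (v : ℝ) (T : ℕ) :
    (Set.univ : Set Ω) ⊆ evN δ ξ v T ∪ ((⋃ t ∈ Finset.range (T+1), evA δ ξ v 0 t)
      ∪ (⋃ t ∈ Finset.range (T+1), evA δ ξ v 1 t)) := by
  intro ω _
  by_cases hN : ∀ s ≤ T, walk δ ξ v s ω ≠ 0 ∧ walk δ ξ v s ω ≠ 1
  · exact Or.inl hN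
  · push_neg at hN
    obtain ⟨s, hsT, hs⟩ := hN
    have hmem : s ∈ {t | walk δ ξ v t ω = 0 ∨ walk δ ξ v t ω = 1} := by
      by_cases h0 : walk δ ξ v s ω = 0
      · exact Or.inl h0
      · exact Or.inr (hs h0)
    set τ := sInf {t | walk δ ξ v t ω = 0 ∨ walk δ ξ v t ω = 1} with hτdef
    have hτs : τ ≤ s := Nat.sInf_le hmem
    have hτmem := Nat.sInf_mem ⟨s, hmem⟩
    have hmin : ∀ r < τ, walk δ ξ v r ω ≠ 0 ∧ walk δ ξ v r ω ≠ 1 := by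
      intro r hr
      have := Nat.notMem_of_lt_sInf hr
      simp only [Set.mem_setOf_eq, not_or] at this
      exact this
    have hτrange : τ ∈ Finset.range (T+1) := Finset.mem_range.2 (by omega)
    rcases hτmem with h | h
    · exact Or.inr (Or.inl (Set.mem_biUnion hτrange ⟨hmin, h⟩))
    · exact Or.inr (Or.inr (Set.mem_biUnion hτrange ⟨hmin, h⟩))

lemma evN_antitone (δ : ℝ) (ξ : ℕ → Ω → ℝ) (v : ℝ) {s T : ℕ} (h : s ≤ T) :
    evN δ ξ v T ⊆ evN δ ξ v s :=
  fun ω hω r hr => hω r (le_trans hr h)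

/-- the conditional event is covered by late hitting events and the no-hit event -/
lemma AB_subset (δ : ℝ) (ξ : ℕ → Ω → ℝ) (v : ℝ) (c : ℝ) (hc : 0 ≤ c) (T : ℕ) :
    ({ω | c < (hitTime01 (walk δ ξ v) ω : ℝ)} ∩
        {ω | walk δ ξ v (hitTime01 (walk δ ξ v) ω) ω = 1})
      ⊆ evN δ ξ v T ∪
        ⋃ t ∈ (Finset.range (T+1)).filter (fun t : ℕ => c < (t:ℝ)), evA δ ξ v 1 t := by
  rintro ω ⟨hc', h1⟩
  simp only [Set.mem_setOf_eq] at hc' h1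
  have hev := hit_mem_evA h1
  set τ := hitTime01 (walk δ ξ v) ω with hτdef
  by_cases hτT : τ ≤ T
  · refine Or.inr (Set.mem_biUnion ?_ hev)
    exact Finset.mem_filter.2 ⟨Finset.mem_range.2 (by omega), hc'⟩
  · push_neg at hτT
    refine Or.inl (fun s hs => ?_)
    have hlt : s < τ := by omega
    exact hev.1 s hlt

end Glue

lemma limit_aux {a b η : ℝ} (hη : 0 ≤ η) (h : ∀ T : ℕ, 1 ≤ T → a ≤ b + η / T) : a ≤ b := by
  by_contra hab
  push_neg at hab
  obtain ⟨T, hT⟩ := exists_nat_gt (η / (a - b))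
  have hd : (0:ℝ) < a - b := by linarith
  have hT1 : 1 ≤ T := by
    by_contra hT0
    push_neg at hT0
    interval_cases T
    simp only [Nat.cast_zero] at hT
    exact absurd hT (not_lt.2 (by positivity))
  have hTpos : (0:ℝ) < T := by exact_mod_cast hT1
  have hηT : η / T < a - b := by
    rw [div_lt_iff₀ hTpos]
    rw [div_lt_iff₀ hd] at hT
    nlinarith
  have := h T hT1
  linarith

end CW

open CW

/-- For every `v ∈ S` with `v > 0`, conditioned on reaching `1` before
`0`, the chain reaches `1` within `2/(3δ²)` steps with probability at least `1/2`:
`Pr_v[τ > 2/(3δ²) | V_τ = 1] ≤ 1/2`. -/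
theorem cond_prob_late_arrival_le_half {Ω : Type} [MeasurableSpace Ω] (P : Measure Ω)
    [IsProbabilityMeasure P] (ξ : ℕ → Ω → ℝ) (hξ : IsCoinSeq P ξ)
    (n : ℕ) (hn : 2 ≤ n) (δ : ℝ) (hδ : δ = 1 / n)
    (v : ℝ) (hv : v ∈ stateSpace n) (hvpos : 0 < v) :
    P ({ω | 2 / (3 * δ ^ 2) < (hitTime01 (walk δ ξ v) ω : ℝ)} ∩
        {ω | walk δ ξ v (hitTime01 (walk δ ξ v) ω) ω = 1}) /
      P {ω | walk δ ξ v (hitTime01 (walk δ ξ v) ω) ω = 1}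
    ≤ 1 / 2 := by
  obtain ⟨k, hk, hvk⟩ := hv
  subst hδ hvk
  have hn0 : 0 < n := by omega
  have hnr : (0:ℝ) < n := by exact_mod_cast hn0
  have hne : (n:ℝ) ≠ 0 := ne_of_gt hnr
  have hk1 : 1 ≤ k := by
    by_contra h
    push_neg at h
    interval_cases k
    simp at hvpos
  have hkr1 : (1:ℝ) ≤ (k:ℝ) := by exact_mod_cast hk1
  have hkrn : (k:ℝ) ≤ (n:ℝ) := by exact_mod_cast hk
  -- abbreviations
  set B : Set Ω := {ω | walk (1/(n:ℝ)) ξ ((k:ℝ)/n) (hitTime01 (walk (1/(n:ℝ)) ξ ((k:ℝ)/n)) ω) ω = 1}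
    with hBdef
  set A : Set Ω := {ω | 2 / (3 * (1/(n:ℝ)) ^ 2) < ((hitTime01 (walk (1/(n:ℝ)) ξ ((k:ℝ)/n)) ω : ℕ) : ℝ)}
    with hAdef
  set c : ℝ := 2 / (3 * (1/(n:ℝ)) ^ 2) with hcdef
  have hc_eq : c = 2*(n:ℝ)^2/3 := by rw [hcdef]; field_simp
  have hc_pos : 0 < c := by rw [hc_eq]; positivity
  set φ : ℝ := (k:ℝ)*((n:ℝ)^2 - (k:ℝ)^2)/(3*(n:ℝ)) with hφdef
  have hφ0 : 0 ≤ φ := by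
    have : (0:ℝ) ≤ (n:ℝ)^2 - (k:ℝ)^2 := by nlinarith
    rw [hφdef]; positivity
  set η : ℝ := (k:ℝ)*((n:ℝ)-(k:ℝ)) with hηdef
  have hη0 : 0 ≤ η := by rw [hηdef]; nlinarith
  have hmeasA : ∀ u : ℝ, ∀ t, MeasurableSet (evA (1/(n:ℝ)) ξ ((k:ℝ)/n) u t) :=
    fun u t => measurableSet_evA _ hξ.1 _ u t
  -- the no-hit probability bound
  have hm_bound : ∀ T : ℕ, 1 ≤ T → (P (evN (1/(n:ℝ)) ξ ((k:ℝ)/n) T)).toReal ≤ η / T := by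
    intro T hT
    have hmul : (T : ENNReal) * P (evN (1/(n:ℝ)) ξ ((k:ℝ)/n) T) ≤ ENNReal.ofReal η := by
      calc (T : ENNReal) * P (evN (1/(n:ℝ)) ξ ((k:ℝ)/n) T)
          = ∑ _s ∈ Finset.range T, P (evN (1/(n:ℝ)) ξ ((k:ℝ)/n) T) := by
            rw [Finset.sum_const, Finset.card_range, nsmul_eq_mul]
        _ ≤ ∑ s ∈ Finset.range T, P (evN (1/(n:ℝ)) ξ ((k:ℝ)/n) s) := by
            refine Finset.sum_le_sum (fun s hs => measure_mono (evN_antitone _ _ _ ?_))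
            exact le_of_lt (Finset.mem_range.1 hs)
        _ ≤ ENNReal.ofReal ((k:ℝ) * ((n:ℝ) - (k:ℝ))) := bound_w n hn0 T Ω _ P ‹_› ξ hξ k hk
    have hfin : (T : ENNReal) * P (evN (1/(n:ℝ)) ξ ((k:ℝ)/n) T) ≠ ⊤ :=
      ENNReal.mul_ne_top (ENNReal.natCast_ne_top T) (measure_ne_top P _)
    have := ENNReal.toReal_mono ENNReal.ofReal_ne_top hmul
    rw [ENNReal.toReal_mul, ENNReal.toReal_natCast, ENNReal.toReal_ofReal hη0] at this
    have hTpos : (0:ℝ) < T := by exact_mod_cast hT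
    rw [le_div_iff₀ hTpos]
    linarith [this]
  -- lower bound for P B
  have hB_lb : (k:ℝ)/n ≤ (P B).toReal := by
    have key : ∀ T : ℕ, 1 ≤ T → (k:ℝ)/n ≤ (P B).toReal + η / T := by
      intro T hT
      have hcover : (1 : ENNReal) ≤ P (evN (1/(n:ℝ)) ξ ((k:ℝ)/n) T)
          + (ENNReal.ofReal (((n-k:ℕ):ℝ)/n) + P B) := by
        calc (1 : ENNReal) = P Set.univ := (measure_univ (μ := P)).symm
          _ ≤ P (evN (1/(n:ℝ)) ξ ((k:ℝ)/n) T ∪ ((⋃ t ∈ Finset.range (T+1),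
                evA (1/(n:ℝ)) ξ ((k:ℝ)/n) 0 t)
              ∪ (⋃ t ∈ Finset.range (T+1), evA (1/(n:ℝ)) ξ ((k:ℝ)/n) 1 t))) :=
            measure_mono (cover_univ _ _ _ T)
          _ ≤ P (evN (1/(n:ℝ)) ξ ((k:ℝ)/n) T) + (P (⋃ t ∈ Finset.range (T+1),
                evA (1/(n:ℝ)) ξ ((k:ℝ)/n) 0 t)
              + P (⋃ t ∈ Finset.range (T+1), evA (1/(n:ℝ)) ξ ((k:ℝ)/n) 1 t)) :=
            le_trans (measure_union_le _ _) (add_le_add_right (measure_union_le _ _) _)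
          _ ≤ P (evN (1/(n:ℝ)) ξ ((k:ℝ)/n) T) + (ENNReal.ofReal (((n-k:ℕ):ℝ)/n) + P B) := by
            refine add_le_add_right (add_le_add ?_ ?_) _
            · refine le_trans (measure_biUnion_finset_le _ _) ?_
              exact bound_c n hn0 T Ω _ P ‹_› ξ hξ k hk
            · refine measure_mono ?_
              exact Set.iUnion₂_subset (fun t _ => evA_subset_hit1 _ _ _ t)
      have hfin1 : P (evN (1/(n:ℝ)) ξ ((k:ℝ)/n) T) ≠ ⊤ := measure_ne_top P _
      have hfin2 : ENNReal.ofReal (((n-k:ℕ):ℝ)/n) ≠ ⊤ := ENNReal.ofReal_ne_top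
      have hfin3 : P B ≠ ⊤ := measure_ne_top P _
      have h2 := ENNReal.toReal_mono (by
          rw [← lt_top_iff_ne_top]
          exact ENNReal.add_lt_top.2 ⟨lt_top_iff_ne_top.2 hfin1,
            ENNReal.add_lt_top.2 ⟨lt_top_iff_ne_top.2 hfin2, lt_top_iff_ne_top.2 hfin3⟩⟩) hcover
      rw [ENNReal.toReal_one, ENNReal.toReal_add hfin1 (ENNReal.add_ne_top.2 ⟨hfin2, hfin3⟩),
        ENNReal.toReal_add hfin2 hfin3, ENNReal.toReal_ofReal (by positivity)] at h2
      have hmT := hm_bound T hT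
      have hcast : ((n-k:ℕ):ℝ) = (n:ℝ) - (k:ℝ) := by rw [Nat.cast_sub hk]
      rw [hcast] at h2
      have : (k:ℝ)/n = 1 - ((n:ℝ)-(k:ℝ))/n := by field_simp; ring
      rw [this]
      linarith [h2, hmT]
    have := limit_aux hη0 (a := (k:ℝ)/n) (b := (P B).toReal) key
    exact this
  -- upper bound for P (A ∩ B)
  have hAB_ub : (P (A ∩ B)).toReal ≤ φ / c := by
    refine limit_aux hη0 ?_
    intro T hT
    have hsub := AB_subset (1/(n:ℝ)) ξ ((k:ℝ)/n) c (le_of_lt hc_pos) T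
    have hineq : P (A ∩ B) ≤ P (evN (1/(n:ℝ)) ξ ((k:ℝ)/n) T)
        + ∑ t ∈ (Finset.range (T+1)).filter (fun t : ℕ => c < (t:ℝ)),
            P (evA (1/(n:ℝ)) ξ ((k:ℝ)/n) 1 t) :=
      le_trans (measure_mono hsub) (le_trans (measure_union_le _ _)
        (add_le_add_right (measure_biUnion_finset_le _ _) _))
    -- weighted bound on the filtered sum
    have hwt : ENNReal.ofReal c * ∑ t ∈ (Finset.range (T+1)).filter (fun t : ℕ => c < (t:ℝ)),
          P (evA (1/(n:ℝ)) ξ ((k:ℝ)/n) 1 t) ≤ ENNReal.ofReal φ := by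
      rw [Finset.mul_sum]
      calc ∑ t ∈ (Finset.range (T+1)).filter (fun t : ℕ => c < (t:ℝ)),
            ENNReal.ofReal c * P (evA (1/(n:ℝ)) ξ ((k:ℝ)/n) 1 t)
          ≤ ∑ t ∈ (Finset.range (T+1)).filter (fun t : ℕ => c < (t:ℝ)),
            (t : ENNReal) * P (evA (1/(n:ℝ)) ξ ((k:ℝ)/n) 1 t) := by
            refine Finset.sum_le_sum (fun t ht => ?_)
            have hct : c < (t:ℝ) := (Finset.mem_filter.1 ht).2
            refine mul_le_mul_left ?_ _
            calc ENNReal.ofReal c ≤ ENNReal.ofReal (t:ℝ) := ENNReal.ofReal_le_ofReal hct.le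
              _ = (t : ENNReal) := ENNReal.ofReal_natCast t
        _ ≤ ∑ t ∈ Finset.range (T+1), (t : ENNReal) * P (evA (1/(n:ℝ)) ξ ((k:ℝ)/n) 1 t) :=
            Finset.sum_le_sum_of_subset (Finset.filter_subset _ _)
        _ ≤ ENNReal.ofReal ((k:ℝ) * ((n:ℝ)^2 - (k:ℝ)^2) / (3*(n:ℝ))) :=
            bound_a n hn0 T Ω _ P ‹_› ξ hξ k hk
    -- to real numbers
    set S : ℝ := (∑ t ∈ (Finset.range (T+1)).filter (fun t : ℕ => c < (t:ℝ)),
        P (evA (1/(n:ℝ)) ξ ((k:ℝ)/n) 1 t)).toReal with hSdef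
    have hsum_fin : (∑ t ∈ (Finset.range (T+1)).filter (fun t : ℕ => c < (t:ℝ)),
        P (evA (1/(n:ℝ)) ξ ((k:ℝ)/n) 1 t)) ≠ ⊤ := by
      refine (lt_top_iff_ne_top.1 ?_)
      exact ENNReal.sum_lt_top.2 (fun t _ => lt_top_iff_ne_top.2 (measure_ne_top P _))
    have hS_le : c * S ≤ φ := by
      have := ENNReal.toReal_mono ENNReal.ofReal_ne_top hwt
      rw [ENNReal.toReal_mul, ENNReal.toReal_ofReal hc_pos.le,
        ENNReal.toReal_ofReal hφ0] at this
      exact this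
    have hS : S ≤ φ / c := by rw [le_div_iff₀ hc_pos]; linarith [hS_le]
    have h3 := ENNReal.toReal_mono (by
        rw [← lt_top_iff_ne_top]
        exact ENNReal.add_lt_top.2 ⟨lt_top_iff_ne_top.2 (measure_ne_top P _),
          lt_top_iff_ne_top.2 hsum_fin⟩) hineq
    rw [ENNReal.toReal_add (measure_ne_top P _) hsum_fin] at h3
    have hmT := hm_bound T hT
    calc (P (A ∩ B)).toReal ≤ (P (evN (1/(n:ℝ)) ξ ((k:ℝ)/n) T)).toReal + S := h3
      _ ≤ η / T + (φ / c) := add_le_add hmT hS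
      _ = φ / c + η / T := by ring
  -- conclude
  have hφc : φ / c ≤ ((k:ℝ)/n) / 2 := by
    rw [div_le_iff₀ hc_pos]
    have hc2 : ((k:ℝ)/n)/2 * c = (k:ℝ)*(n:ℝ)/3 := by rw [hc_eq]; field_simp
    rw [hc2, hφdef]
    rw [div_le_div_iff₀ (by positivity : (0:ℝ) < 3*(n:ℝ)) (by norm_num : (0:ℝ) < 3)]
    nlinarith [hkr1, hnr, hkrn, mul_nonneg (mul_nonneg (le_trans zero_le_one hkr1)
      (le_trans zero_le_one hkr1)) (le_trans zero_le_one hkr1)]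
  have hfinal : P (A ∩ B) ≤ (1/2 : ENNReal) * P B := by
    have h1 : P (A ∩ B) = ENNReal.ofReal ((P (A ∩ B)).toReal) :=
      (ENNReal.ofReal_toReal (measure_ne_top P _)).symm
    have h2 : ENNReal.ofReal ((k:ℝ)/n) ≤ P B := by
      calc ENNReal.ofReal ((k:ℝ)/n) ≤ ENNReal.ofReal ((P B).toReal) :=
            ENNReal.ofReal_le_ofReal hB_lb
        _ = P B := ENNReal.ofReal_toReal (measure_ne_top P _)
    calc P (A ∩ B) = ENNReal.ofReal ((P (A ∩ B)).toReal) := h1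
      _ ≤ ENNReal.ofReal (((k:ℝ)/n)/2) :=
          ENNReal.ofReal_le_ofReal (le_trans hAB_ub (le_trans hφc (le_refl _)))
      _ = (1/2 : ENNReal) * ENNReal.ofReal ((k:ℝ)/n) := by
          rw [half_ennreal, ← ENNReal.ofReal_mul (by norm_num)]
          ring_nf
      _ ≤ (1/2 : ENNReal) * P B := mul_le_mul_right h2 _
  exact ENNReal.div_le_of_le_mul hfinal
end
end

section
/- For every v ∈ S and T₀ = ⌈3/(8δ²)⌉, the probability that the chain started at v reaches 1 before 0 and does so within T₀ steps is at least v/9: Pr_v[ V_τ = 1 and τ ≤ T₀ ] ≥ v/9. -/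
open MeasureTheory ProbabilityTheory

noncomputable section

/-! ### Auxiliary development -/

/-- The exact probability of hitting `1` within `T` steps before hitting `0`,
defined by the one-step recursion. -/
def qfun (δ : ℝ) : ℕ → ℝ → ℝ
  | 0, v => if v = 1 then 1 else 0
  | (T + 1), v =>
      if v = 0 then 0 else if v = 1 then 1
      else (qfun δ T (v + δ) + qfun δ T (v - δ)) / 2

/-- The event: the walk hits `1` within `T` steps, without having visited `0` or `1` before. -/
def Ev {Ω : Type} (δ : ℝ) (ξ : ℕ → Ω → ℝ) (v : ℝ) (T : ℕ) : Set Ω :=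
  ⋃ t ∈ Set.Iic T, ({ω | walk δ ξ v t ω = 1} ∩
    ⋂ s ∈ Set.Iio t, {ω | walk δ ξ v s ω ≠ 0 ∧ walk δ ξ v s ω ≠ 1})

lemma mem_Ev {Ω : Type} {δ : ℝ} {ξ : ℕ → Ω → ℝ} {v : ℝ} {T : ℕ} {ω : Ω} :
    ω ∈ Ev δ ξ v T ↔ ∃ t ≤ T, walk δ ξ v t ω = 1 ∧
      ∀ s < t, walk δ ξ v s ω ≠ 0 ∧ walk δ ξ v s ω ≠ 1 := by
  simp only [Ev, Set.mem_iUnion, Set.mem_iInter, Set.mem_Iic, Set.mem_Iio, Set.mem_inter_iff,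
    Set.mem_setOf_eq, exists_prop]

lemma walk_succ {Ω : Type} (δ : ℝ) (ξ : ℕ → Ω → ℝ) (v : ℝ) (t : ℕ) (ω : Ω) :
    walk δ ξ v (t + 1) ω =
      if walk δ ξ v t ω = 0 then 0 else if walk δ ξ v t ω = 1 then 1 - δ
      else walk δ ξ v t ω + δ * ξ t ω := rfl

lemma walk_zero_start {Ω : Type} (δ : ℝ) (ξ : ℕ → Ω → ℝ) (t : ℕ) (ω : Ω) :
    walk δ ξ (0 : ℝ) t ω = 0 := by
  induction t with
  | zero => rfl
  | succ t ih => rw [walk_succ, ih]; simp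

lemma walk_shift {Ω : Type} (δ : ℝ) (ξ : ℕ → Ω → ℝ) {v : ℝ} (hv0 : v ≠ 0) (hv1 : v ≠ 1)
    (t : ℕ) (ω : Ω) :
    walk δ ξ v (t + 1) ω = walk δ (fun i => ξ (i + 1)) (v + δ * ξ 0 ω) t ω := by
  induction t with
  | zero => rw [walk_succ]; simp [hv0, hv1, walk]
  | succ t ih => rw [walk_succ, ih]; rfl

lemma walk_measurable {Ω : Type} {m' : MeasurableSpace Ω} {δ : ℝ} {ξ : ℕ → Ω → ℝ}
    (hξ : ∀ i, Measurable[m'] (ξ i)) (v : ℝ) (t : ℕ) :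
    Measurable[m'] (walk δ ξ v t) := by
  induction t with
  | zero => exact measurable_const
  | succ t ih =>
      have h0 : MeasurableSet[m'] {ω | walk δ ξ v t ω = 0} := ih (measurableSet_singleton 0)
      have h1 : MeasurableSet[m'] {ω | walk δ ξ v t ω = 1} := ih (measurableSet_singleton 1)
      have : Measurable[m'] (fun ω => if walk δ ξ v t ω = 0 then (0:ℝ)
          else if walk δ ξ v t ω = 1 then 1 - δ else walk δ ξ v t ω + δ * ξ t ω) := by
        refine Measurable.ite h0 measurable_const ?_
        refine Measurable.ite h1 measurable_const ?_
        exact ih.add (measurable_const.mul (hξ t))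
      exact this

lemma Ev_measurable {Ω : Type} {m' : MeasurableSpace Ω} {δ : ℝ} {ξ : ℕ → Ω → ℝ}
    (hξ : ∀ i, Measurable[m'] (ξ i)) (v : ℝ) (T : ℕ) :
    MeasurableSet[m'] (Ev δ ξ v T) := by
  refine MeasurableSet.biUnion (Set.to_countable _) (fun t _ => ?_)
  refine MeasurableSet.inter (walk_measurable hξ v t (measurableSet_singleton 1)) ?_
  refine MeasurableSet.biInter (Set.to_countable _) (fun s _ => ?_)
  have h0 : MeasurableSet[m'] {ω | walk δ ξ v s ω = 0} :=
    walk_measurable hξ v s (measurableSet_singleton 0)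
  have h1 : MeasurableSet[m'] {ω | walk δ ξ v s ω = 1} :=
    walk_measurable hξ v s (measurableSet_singleton 1)
  have : {ω | walk δ ξ v s ω ≠ 0 ∧ walk δ ξ v s ω ≠ 1}
      = ({ω | walk δ ξ v s ω = 0} ∪ {ω | walk δ ξ v s ω = 1})ᶜ := by
    ext ω; simp [not_or]
  rw [this]
  exact (h0.union h1).compl

/-- Shifting a coin sequence gives a coin sequence. -/
lemma IsCoinSeq.shift {Ω : Type} [MeasurableSpace Ω] {P : Measure Ω} {ξ : ℕ → Ω → ℝ}
    (h : IsCoinSeq P ξ) : IsCoinSeq P (fun i => ξ (i + 1)) := by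
  obtain ⟨hm, hi, hd⟩ := h
  refine ⟨fun i => hm (i + 1), ?_, fun i => hd (i + 1)⟩
  rw [iIndepFun_iff_iIndep] at hi ⊢
  rw [iIndep_iff] at hi ⊢
  intro s f hf
  classical
  have hinj : ∀ a ∈ s, ∀ b ∈ s, a + 1 = b + 1 → a = b := fun a _ b _ h => by omega
  set g : ℕ → Set Ω := fun j => if 1 ≤ j then f (j - 1) else Set.univ with hg
  have hgmeas : ∀ j ∈ s.image (fun i => i + 1),
      MeasurableSet[MeasurableSpace.comap (ξ j) Real.measurableSpace] (g j) := by
    rintro j hj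
    simp only [Finset.mem_image] at hj
    obtain ⟨i, hi', rfl⟩ := hj
    simpa [hg] using hf i hi'
  have key := hi (s.image (fun i => i + 1)) hgmeas
  have e1 : (⋂ j ∈ s.image (fun i => i + 1), g j) = ⋂ i ∈ s, f i := by
    ext ω
    simp only [Set.mem_iInter, Finset.mem_image]
    constructor
    · intro h i hi'
      have := h (i + 1) ⟨i, hi', rfl⟩
      simpa [hg] using this
    · rintro h j ⟨i, hi', rfl⟩
      simpa [hg] using h i hi'
  have e2 : (∏ j ∈ s.image (fun i => i + 1), P (g j)) = ∏ i ∈ s, P (f i) := by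
    rw [Finset.prod_image hinj]
    exact Finset.prod_congr rfl (fun i _ => by simp [hg])
  rw [e1, e2] at key
  exact key

lemma qfun_nonneg (δ : ℝ) : ∀ T v, 0 ≤ qfun δ T v := by
  intro T
  induction T with
  | zero => intro v; simp only [qfun]; split <;> norm_num
  | succ T ih =>
      intro v
      simp only [qfun]
      split
      · norm_num
      · split
        · norm_num
        · exact div_nonneg (add_nonneg (ih _) (ih _)) (by norm_num)


lemma coin_prob_one {Ω : Type} [MeasurableSpace Ω] {P : Measure Ω} {ξ : ℕ → Ω → ℝ}
    (h : IsCoinSeq P ξ) (i : ℕ) : P {ω | ξ i ω = 1} = 1 / 2 := by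
  have : {ω | ξ i ω = 1} = ξ i ⁻¹' {1} := rfl
  rw [this, ← Measure.map_apply (h.1 i) (measurableSet_singleton _), h.2.2 i]
  norm_num [Measure.dirac_apply' _ (measurableSet_singleton _), Set.indicator_apply]

lemma coin_prob_negone {Ω : Type} [MeasurableSpace Ω] {P : Measure Ω} {ξ : ℕ → Ω → ℝ}
    (h : IsCoinSeq P ξ) (i : ℕ) : P {ω | ξ i ω = -1} = 1 / 2 := by
  have : {ω | ξ i ω = -1} = ξ i ⁻¹' {-1} := rfl
  rw [this, ← Measure.map_apply (h.1 i) (measurableSet_singleton _), h.2.2 i]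
  norm_num [Measure.dirac_apply' _ (measurableSet_singleton _), Set.indicator_apply]

lemma coin_prob_other {Ω : Type} [MeasurableSpace Ω] {P : Measure Ω} {ξ : ℕ → Ω → ℝ}
    (h : IsCoinSeq P ξ) (i : ℕ) : P {ω | ξ i ω ≠ 1 ∧ ξ i ω ≠ -1} = 0 := by
  have h1 : {ω | ξ i ω ≠ 1 ∧ ξ i ω ≠ -1} = ξ i ⁻¹' ({1, -1}ᶜ) := by
    ext ω; simp [not_or]
  have hms : MeasurableSet (({1, -1} : Set ℝ)ᶜ) :=
    (((measurableSet_singleton 1).union (measurableSet_singleton (-1)))).compl.congr rfl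
  rw [h1, ← Measure.map_apply (h.1 i) hms, h.2.2 i]
  simp [Measure.dirac_apply' _ hms]

/-- The σ-algebra generated by all coins except the first one. -/
def tailAlg {Ω : Type} (ξ : ℕ → Ω → ℝ) : MeasurableSpace Ω :=
  ⨆ j ∈ ({0}ᶜ : Set ℕ), MeasurableSpace.comap (ξ j) Real.measurableSpace

lemma P_Ev {Ω : Type} [mΩ : MeasurableSpace Ω] (P : Measure Ω) [IsProbabilityMeasure P] :
    ∀ (T : ℕ) (ξ : ℕ → Ω → ℝ), IsCoinSeq P ξ → ∀ (δ v : ℝ),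
      P (Ev δ ξ v T) = ENNReal.ofReal (qfun δ T v) := by
  intro T
  induction T with
  | zero =>
      intro ξ hξc δ v
      by_cases hv : v = 1
      · have hE : Ev δ ξ v 0 = Set.univ := by
          ext ω
          simp only [mem_Ev, Set.mem_univ, iff_true]
          exact ⟨0, le_refl 0, hv, fun s hs => absurd hs (Nat.not_lt_zero s)⟩
        rw [hE]
        simp [qfun, hv]
      · have hE : Ev δ ξ v 0 = ∅ := by
          ext ω
          simp only [mem_Ev, Set.mem_empty_iff_false, iff_false, not_exists]
          intro t
          rintro ⟨ht, h1, -⟩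
          interval_cases t
          exact hv h1
        rw [hE]
        simp [qfun, hv]
  | succ T ih =>
      intro ξ hξc δ v
      obtain ⟨hm, hiIndep, hdist⟩ := hξc
      by_cases hv0 : v = 0
      · subst hv0
        have hE : Ev δ ξ (0:ℝ) (T+1) = ∅ := by
          ext ω
          simp only [mem_Ev, Set.mem_empty_iff_false, iff_false, not_exists]
          rintro t ⟨-, h1, -⟩
          rw [walk_zero_start] at h1
          norm_num at h1
        rw [hE]
        simp [qfun]
      · by_cases hv1 : v = 1
        · subst hv1
          have hE : Ev δ ξ (1:ℝ) (T+1) = Set.univ := by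
            ext ω
            simp only [mem_Ev, Set.mem_univ, iff_true]
            exact ⟨0, Nat.zero_le _, rfl, fun s hs => absurd hs (Nat.not_lt_zero s)⟩
          rw [hE]
          simp [qfun]
        · -- interior case
          set ξ' : ℕ → Ω → ℝ := fun i => ξ (i + 1) with hξ'def
          have hξ'c : IsCoinSeq P ξ' := IsCoinSeq.shift ⟨hm, hiIndep, hdist⟩
          set Ap := Ev δ ξ' (v + δ) T with hApdef
          set Am := Ev δ ξ' (v - δ) T with hAmdef
          set Bp := {ω | ξ 0 ω = 1} with hBpdef
          set Bm := {ω | ξ 0 ω = -1} with hBmdef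
          set N := {ω | ξ 0 ω ≠ 1 ∧ ξ 0 ω ≠ -1} with hNdef
          -- the splitting identities
          have hsplitp : Ev δ ξ v (T+1) ∩ Bp = Ap ∩ Bp := by
            ext ω
            simp only [Set.mem_inter_iff, hBpdef, Set.mem_setOf_eq, and_congr_left_iff]
            intro hB
            have hshift : ∀ s, walk δ ξ v (s + 1) ω = walk δ ξ' (v + δ) s ω := by
              intro s
              rw [walk_shift δ ξ hv0 hv1 s ω, hB, mul_one]
            rw [mem_Ev, mem_Ev]
            constructor
            · rintro ⟨t, ht, h1, hmin⟩
              rcases t with _ | t'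
              · exact absurd h1 hv1
              · refine ⟨t', Nat.lt_succ_iff.mp ht, by rw [← hshift]; exact h1, ?_⟩
                intro s hs
                rw [← hshift]
                exact hmin (s + 1) (Nat.succ_lt_succ hs)
            · rintro ⟨t', ht', h1, hmin⟩
              refine ⟨t' + 1, Nat.succ_le_succ ht', by rw [hshift]; exact h1, ?_⟩
              intro s hs
              rcases s with _ | s'
              · exact ⟨hv0, hv1⟩
              · rw [hshift]
                exact hmin s' (Nat.succ_lt_succ_iff.mp hs)
          have hsplitm : Ev δ ξ v (T+1) ∩ Bm = Am ∩ Bm := by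
            ext ω
            simp only [Set.mem_inter_iff, hBmdef, Set.mem_setOf_eq, and_congr_left_iff]
            intro hB
            have hshift : ∀ s, walk δ ξ v (s + 1) ω = walk δ ξ' (v - δ) s ω := by
              intro s
              rw [walk_shift δ ξ hv0 hv1 s ω, hB, mul_neg_one, ← sub_eq_add_neg]
            rw [mem_Ev, mem_Ev]
            constructor
            · rintro ⟨t, ht, h1, hmin⟩
              rcases t with _ | t'
              · exact absurd h1 hv1
              · refine ⟨t', Nat.lt_succ_iff.mp ht, by rw [← hshift]; exact h1, ?_⟩
                intro s hs
                rw [← hshift]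
                exact hmin (s + 1) (Nat.succ_lt_succ hs)
            · rintro ⟨t', ht', h1, hmin⟩
              refine ⟨t' + 1, Nat.succ_le_succ ht', by rw [hshift]; exact h1, ?_⟩
              intro s hs
              rcases s with _ | s'
              · exact ⟨hv0, hv1⟩
              · rw [hshift]
                exact hmin s' (Nat.succ_lt_succ_iff.mp hs)
          -- measurability / independence
          have hM_le : tailAlg ξ ≤ mΩ :=
            iSup₂_le fun j _ => measurable_iff_comap_le.mp (hm j)
          have hξ'M : ∀ i, Measurable[tailAlg ξ] (ξ' i) := by
            intro i
            refine measurable_iff_comap_le.mpr ?_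
            exact le_biSup (f := fun j => MeasurableSpace.comap (ξ j) Real.measurableSpace)
              (show (i + 1) ∈ ({0}ᶜ : Set ℕ) by simp)
          have hApM : MeasurableSet[tailAlg ξ] Ap := Ev_measurable hξ'M _ _
          have hAmM : MeasurableSet[tailAlg ξ] Am := Ev_measurable hξ'M _ _
          have hApmeas : MeasurableSet[mΩ] Ap := hM_le _ hApM
          have hAmmeas : MeasurableSet[mΩ] Am := hM_le _ hAmM
          have hIndep : Indep
              (⨆ j ∈ ({0} : Set ℕ), MeasurableSpace.comap (ξ j) Real.measurableSpace)
              (tailAlg ξ) P := by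
            refine indep_iSup_of_disjoint (fun i => measurable_iff_comap_le.mp (hm i))
              ?_ disjoint_compl_right
            exact hiIndep
          have hBpmem : MeasurableSet[⨆ j ∈ ({0} : Set ℕ),
              MeasurableSpace.comap (ξ j) Real.measurableSpace] Bp := by
            have : MeasurableSet[MeasurableSpace.comap (ξ 0) Real.measurableSpace] Bp :=
              ⟨{1}, measurableSet_singleton 1, rfl⟩
            exact le_biSup (f := fun j => MeasurableSpace.comap (ξ j) Real.measurableSpace)
              (show (0:ℕ) ∈ ({0} : Set ℕ) from rfl) _ this
          have hBmmem : MeasurableSet[⨆ j ∈ ({0} : Set ℕ),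
              MeasurableSpace.comap (ξ j) Real.measurableSpace] Bm := by
            have : MeasurableSet[MeasurableSpace.comap (ξ 0) Real.measurableSpace] Bm :=
              ⟨{-1}, measurableSet_singleton (-1), rfl⟩
            exact le_biSup (f := fun j => MeasurableSpace.comap (ξ j) Real.measurableSpace)
              (show (0:ℕ) ∈ ({0} : Set ℕ) from rfl) _ this
          have hBpmeas : MeasurableSet[mΩ] Bp := (hm 0) (measurableSet_singleton 1)
          have hBmmeas : MeasurableSet[mΩ] Bm := (hm 0) (measurableSet_singleton (-1))
          have hProdp : P (Bp ∩ Ap) = P Bp * P Ap :=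
            (Indep_iff _ _ _).mp hIndep Bp Ap hBpmem hApM
          have hProdm : P (Bm ∩ Am) = P Bm * P Am :=
            (Indep_iff _ _ _).mp hIndep Bm Am hBmmem hAmM
          have hPBp : P Bp = 1/2 := coin_prob_one ⟨hm, hiIndep, hdist⟩ 0
          have hPBm : P Bm = 1/2 := coin_prob_negone ⟨hm, hiIndep, hdist⟩ 0
          have hPN : P N = 0 := coin_prob_other ⟨hm, hiIndep, hdist⟩ 0
          -- decompose the measure
          have hdisjB : Disjoint (Ev δ ξ v (T+1) ∩ Bp) (Ev δ ξ v (T+1) ∩ Bm) := by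
            rw [Set.disjoint_left]
            rintro ω ⟨-, h1⟩ ⟨-, h2⟩
            rw [hBpdef] at h1; rw [hBmdef] at h2
            simp only [Set.mem_setOf_eq] at h1 h2
            norm_num [h1] at h2
          have h_le : P (Ev δ ξ v (T+1))
              ≤ P (Ev δ ξ v (T+1) ∩ Bp) + P (Ev δ ξ v (T+1) ∩ Bm) := by
            have hcover : Ev δ ξ v (T+1) ⊆
                ((Ev δ ξ v (T+1) ∩ Bp) ∪ (Ev δ ξ v (T+1) ∩ Bm)) ∪ N := by
              intro ω hω
              by_cases h1 : ξ 0 ω = 1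
              · exact Or.inl (Or.inl ⟨hω, h1⟩)
              · by_cases h2 : ξ 0 ω = -1
                · exact Or.inl (Or.inr ⟨hω, h2⟩)
                · exact Or.inr ⟨h1, h2⟩
            calc P (Ev δ ξ v (T+1))
                ≤ P (((Ev δ ξ v (T+1) ∩ Bp) ∪ (Ev δ ξ v (T+1) ∩ Bm)) ∪ N) :=
                  measure_mono hcover
              _ ≤ P ((Ev δ ξ v (T+1) ∩ Bp) ∪ (Ev δ ξ v (T+1) ∩ Bm)) + P N :=
                  measure_union_le _ _
              _ ≤ (P (Ev δ ξ v (T+1) ∩ Bp) + P (Ev δ ξ v (T+1) ∩ Bm)) + P N :=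
                  add_le_add_left (measure_union_le _ _) _
              _ = P (Ev δ ξ v (T+1) ∩ Bp) + P (Ev δ ξ v (T+1) ∩ Bm) := by
                  rw [hPN, add_zero]
          have hEvmeas : MeasurableSet[mΩ] (Ev δ ξ v (T+1)) := Ev_measurable hm _ _
          have h_ge : P (Ev δ ξ v (T+1) ∩ Bp) + P (Ev δ ξ v (T+1) ∩ Bm)
              ≤ P (Ev δ ξ v (T+1)) := by
            rw [← measure_union hdisjB (hEvmeas.inter hBmmeas)]
            exact measure_mono (Set.union_subset Set.inter_subset_left Set.inter_subset_left)
          have hPEv : P (Ev δ ξ v (T+1))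
              = P (Ev δ ξ v (T+1) ∩ Bp) + P (Ev δ ξ v (T+1) ∩ Bm) :=
            le_antisymm h_le h_ge
          -- put everything together
          rw [hPEv, hsplitp, hsplitm, Set.inter_comm Ap Bp, Set.inter_comm Am Bm,
            hProdp, hProdm, hPBp, hPBm, ih ξ' hξ'c δ (v + δ), ih ξ' hξ'c δ (v - δ)]
          have hq : qfun δ (T+1) v = (qfun δ T (v + δ) + qfun δ T (v - δ)) / 2 := by
            simp [qfun, hv0, hv1]
          rw [hq]
          have ha := qfun_nonneg δ T (v + δ)
          have hb := qfun_nonneg δ T (v - δ)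
          rw [show ((qfun δ T (v + δ) + qfun δ T (v - δ)) / 2)
              = qfun δ T (v + δ) * (1/2) + qfun δ T (v - δ) * (1/2) by ring]
          rw [ENNReal.ofReal_add (by positivity) (by positivity),
            ENNReal.ofReal_mul ha, ENNReal.ofReal_mul hb]
          rw [show ENNReal.ofReal (1/2) = 1/2 by
            rw [ENNReal.ofReal_div_of_pos (by norm_num)]; norm_num]
          ring

lemma qfun_interior (δ : ℝ) (T : ℕ) {v : ℝ} (h0 : v ≠ 0) (h1 : v ≠ 1) :
    qfun δ (T+1) v = (qfun δ T (v + δ) + qfun δ T (v - δ)) / 2 := by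
  simp [qfun, h0, h1]

/-- `E_v[τ · 1_{hit 1}]` for the unrestricted gambler's ruin, in closed form. -/
def Wfun (n : ℕ) (a : ℝ) : ℝ := a / n * (1 - (a / n) ^ 2) * n ^ 2 / 3

lemma Wfun_identity (n : ℕ) (hn : (n:ℝ) ≠ 0) (a : ℝ) :
    Wfun n (a + 1) + Wfun n (a - 1) = 2 * Wfun n a - 2 * (a / n) := by
  unfold Wfun
  field_simp
  ring

lemma qfun_lower (n : ℕ) (hn : 2 ≤ n) :
    ∀ T : ℕ, ∀ k : ℕ, k ≤ n →
      (k:ℝ)/n - Wfun n k / (T+1) ≤ qfun (1/(n:ℝ)) (T+1) ((k:ℝ)/n) := by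
  have hn0 : (0:ℝ) < n := by
    have : (0:ℕ) < n := by omega
    exact_mod_cast this
  have hne : (n:ℝ) ≠ 0 := ne_of_gt hn0
  -- boundary and interior helpers
  have hbdry : ∀ T : ℕ, ∀ k : ℕ, k ≤ n → (k = 0 ∨ k = n) →
      (k:ℝ)/n - Wfun n k / (T+1) ≤ qfun (1/(n:ℝ)) (T+1) ((k:ℝ)/n) := by
    rintro T k hk (rfl | hkn)
    · simp [qfun, Wfun]
    · rw [hkn]
      have h1 : (n:ℝ)/n = 1 := div_self hne
      rw [h1]
      have hW : Wfun n n = 0 := by unfold Wfun; rw [h1]; ring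
      rw [hW]
      simp [qfun]
  have hWv : ∀ k : ℕ, 1 ≤ k → k + 1 ≤ n → (k:ℝ)/n ≤ Wfun n k := by
    intro k hk1 hkn
    have hkr : (1:ℝ) ≤ (k:ℝ) := by exact_mod_cast hk1
    have hknr : (k:ℝ) + 1 ≤ (n:ℝ) := by exact_mod_cast hkn
    have h3 : (3:ℝ) ≤ (1 - ((k:ℝ)/n)^2) * n^2 := by
      have he : (1 - ((k:ℝ)/n)^2) * n^2 = n^2 - (k:ℝ)^2 := by field_simp
      rw [he]
      nlinarith [sq_nonneg ((n:ℝ) - k - 1)]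
    have hv0 : (0:ℝ) ≤ (k:ℝ)/n := by positivity
    unfold Wfun
    nlinarith
  intro T
  induction T with
  | zero =>
      intro k hk
      rcases Nat.lt_or_ge 0 k with hk0 | hk0
      · rcases Nat.lt_or_ge k n with hkn | hkn
        · -- interior
          have hq := qfun_nonneg (1/(n:ℝ)) 1 ((k:ℝ)/n)
          have hW := hWv k (by omega) (by omega)
          rw [show ((0:ℕ):ℝ) + 1 = 1 by norm_num, div_one]
          linarith
        · exact hbdry 0 k hk (Or.inr (by omega))
      · exact hbdry 0 k hk (Or.inl (by omega))
  | succ T ih =>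
      intro k hk
      rcases Nat.lt_or_ge 0 k with hk0 | hk0
      · rcases Nat.lt_or_ge k n with hkn | hkn
        · -- interior : 1 ≤ k ≤ n - 1
          obtain ⟨j, rfl⟩ : ∃ j, k = j + 1 := ⟨k - 1, by omega⟩
          set a : ℝ := ((j:ℝ) + 1) with ha
          have hcast : ((j + 1 : ℕ) : ℝ) = a := by push_cast; rfl
          have hv0 : a / n ≠ 0 := by positivity
          have hv1 : a / n ≠ 1 := by
            have : a / n < 1 := by
              rw [div_lt_one hn0]
              have : (j:ℝ) + 1 < (n:ℝ) := by exact_mod_cast hkn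
              linarith
            exact ne_of_lt this
          have hrec := qfun_interior (1/(n:ℝ)) (T+1) hv0 hv1
          have hplus : a / n + 1/(n:ℝ) = ((j + 2 : ℕ) : ℝ) / n := by
            push_cast; field_simp; ring
          have hminus : a / n - 1/(n:ℝ)  = ((j : ℕ) : ℝ) / n := by
            push_cast; field_simp; ring
          have ih1 := ih (j + 2) (by omega)
          have ih2 := ih j (by omega)
          rw [hcast, hrec, hplus, hminus]
          have hTpos : (0:ℝ) < (T:ℝ) + 1 := by positivity
          have hT2pos : (0:ℝ) < (T:ℝ) + 1 + 1 := by positivity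
          have hq1 := qfun_nonneg (1/(n:ℝ)) (T+1) (((j + 2 : ℕ) : ℝ) / n)
          have hq2 := qfun_nonneg (1/(n:ℝ)) (T+1) (((j : ℕ) : ℝ) / n)
          -- identity for the average of Wfun
          have hWid : Wfun n ((j + 2 : ℕ) : ℝ) + Wfun n ((j : ℕ) : ℝ)
              = 2 * Wfun n a - 2 * (a / n) := by
            have h2 : ((j + 2 : ℕ) : ℝ) = a + 1 := by push_cast; ring
            have h0 : ((j : ℕ) : ℝ) = a - 1 := by push_cast; ring
            rw [h2, h0]
            exact Wfun_identity n hne a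
          rcases le_or_gt (Wfun n a) (((T:ℝ) + 1 + 1) * (a / n)) with hcase | hcase
          · -- main case
            have hsum : (((j + 2 : ℕ) : ℝ) / n - Wfun n ((j + 2 : ℕ) : ℝ) / ((T:ℝ)+1))
                + (((j : ℕ) : ℝ) / n - Wfun n ((j : ℕ) : ℝ) / ((T:ℝ)+1))
                ≤ qfun (1/(n:ℝ)) (T+1) (((j + 2 : ℕ) : ℝ) / n)
                  + qfun (1/(n:ℝ)) (T+1) (((j : ℕ) : ℝ) / n) :=
              add_le_add ih1 ih2
            have c1 : ((T + 1 : ℕ) : ℝ) + 1 = (T:ℝ) + 1 + 1 := by push_cast; ring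
            rw [c1]
            have hfinal : (Wfun n a - a/n)/((T:ℝ)+1) ≤ Wfun n a/((T:ℝ)+1+1) := by
              rw [div_le_div_iff₀ hTpos hT2pos]
              nlinarith [hcase]
            have e1 : ((j + 2 : ℕ):ℝ)/n + ((j : ℕ):ℝ)/n = 2*(a/n) := by
              push_cast; ring
            have e2 : Wfun n ((j + 2 : ℕ) : ℝ)/((T:ℝ)+1) + Wfun n ((j : ℕ) : ℝ)/((T:ℝ)+1)
                = 2*((Wfun n a - a/n)/((T:ℝ)+1)) := by
              rw [← add_div, hWid]; ring
            linarith [hsum, hfinal]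
          · -- degenerate case : target is nonpositive
            have hneg : a / n - Wfun n a / ((T:ℝ) + 1 + 1) < 0 := by
              rw [sub_neg, lt_div_iff₀ hT2pos]
              linarith [hcase]
            have : (0:ℝ) ≤ (qfun (1/(n:ℝ)) (T+1) (((j + 2 : ℕ) : ℝ) / n)
                + qfun (1/(n:ℝ)) (T+1) (((j : ℕ) : ℝ) / n)) / 2 := by positivity
            push_cast
            push_cast at hneg this
            linarith
        · exact hbdry (T+1) k hk (Or.inr (by omega))
      · exact hbdry (T+1) k hk (Or.inl (by omega))

/-- For every `v ∈ S` and `T₀ = ⌈3/(8δ²)⌉`, the probability that the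
chain started at `v` reaches `1` before `0` and does so within `T₀` steps is at least
`v/9`. -/
theorem prob_hit_one_fast {Ω : Type} [MeasurableSpace Ω] (P : Measure Ω)
    [IsProbabilityMeasure P] (ξ : ℕ → Ω → ℝ) (hξ : IsCoinSeq P ξ)
    (n : ℕ) (hn : 2 ≤ n) (δ : ℝ) (hδ : δ = 1 / n)
    (T₀ : ℕ) (hT₀ : T₀ = ⌈3 / (8 * δ ^ 2)⌉₊)
    (v : ℝ) (hv : v ∈ stateSpace n) :
    ENNReal.ofReal (v / 9)
      ≤ P {ω | walk δ ξ v (hitTime01 (walk δ ξ v) ω) ω = 1 ∧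
            hitTime01 (walk δ ξ v) ω ≤ T₀} := by
  obtain ⟨k, hk, hveq⟩ := hv
  have hn0 : (0:ℝ) < n := by
    have : (0:ℕ) < n := by omega
    exact_mod_cast this
  have hne : (n:ℝ) ≠ 0 := ne_of_gt hn0
  have hδ0 : 0 < δ := by rw [hδ]; positivity
  have hset : {ω | walk δ ξ v (hitTime01 (walk δ ξ v) ω) ω = 1 ∧
      hitTime01 (walk δ ξ v) ω ≤ T₀} = Ev δ ξ v T₀ := by
    ext ω
    rw [Set.mem_setOf_eq, mem_Ev]
    constructor
    · rintro ⟨h1, h2⟩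
      refine ⟨hitTime01 (walk δ ξ v) ω, h2, h1, ?_⟩
      intro s hs
      have hs' : s ∉ {t | walk δ ξ v t ω = 0 ∨ walk δ ξ v t ω = 1} :=
        Nat.notMem_of_lt_sInf hs
      simpa [not_or] using hs'
    · rintro ⟨t, ht, h1, hmin⟩
      have htmem : t ∈ {t | walk δ ξ v t ω = 0 ∨ walk δ ξ v t ω = 1} := Or.inr h1
      have hle : hitTime01 (walk δ ξ v) ω ≤ t := Nat.sInf_le htmem
      have heq : hitTime01 (walk δ ξ v) ω = t := by
        rcases eq_or_lt_of_le hle with h | h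
        · exact h
        · exfalso
          have hmem := Nat.sInf_mem
            (⟨t, htmem⟩ : {t | walk δ ξ v t ω = 0 ∨ walk δ ξ v t ω = 1}.Nonempty)
          have hboth := hmin _ h
          rcases hmem with h0 | h0
          · exact hboth.1 h0
          · exact hboth.2 h0
      rw [heq]
      exact ⟨h1, ht⟩
  rw [hset, P_Ev P T₀ ξ hξ δ v]
  apply ENNReal.ofReal_le_ofReal
  have hT₀1 : 1 ≤ T₀ := by
    rw [hT₀]
    rw [Nat.one_le_ceil_iff]
    exact div_pos (by norm_num) (by positivity)
  obtain ⟨T₁, hT₁⟩ : ∃ T₁, T₀ = T₁ + 1 := ⟨T₀ - 1, by omega⟩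
  have hqlow := qfun_lower n hn T₁ k hk
  subst hveq
  rw [hδ, hT₁]
  -- real-number estimates
  set v : ℝ := (k:ℝ)/n with hvdef
  have hv0 : 0 ≤ v := by positivity
  have hv1 : v ≤ 1 := by
    rw [hvdef, div_le_one hn0]
    exact_mod_cast hk
  have hvsq : v^2 ≤ 1 := by nlinarith
  have hW0 : 0 ≤ Wfun n k := by
    unfold Wfun
    rw [← hvdef]
    have : (0:ℝ) ≤ 1 - v^2 := by linarith
    positivity
  have hWub : Wfun n k ≤ v * n^2 / 3 := by
    unfold Wfun
    rw [← hvdef]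
    nlinarith [mul_nonneg (mul_nonneg hv0 (sq_nonneg v)) (sq_nonneg ((n:ℝ)))]
  have hceil : 3 * (n:ℝ)^2 / 8 ≤ (T₁:ℝ) + 1 := by
    have h1 : (3:ℝ) / (8 * δ^2) ≤ ((T₀:ℕ):ℝ) := by
      rw [hT₀]
      exact Nat.le_ceil _
    have h2 : (3:ℝ) / (8 * δ^2) = 3 * (n:ℝ)^2 / 8 := by
      rw [hδ]
      field_simp
    rw [h2] at h1
    rw [hT₁] at h1
    push_cast at h1
    linarith
  have hTpos : (0:ℝ) < (T₁:ℝ) + 1 := by positivity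
  have hden : (0:ℝ) < 3 * (n:ℝ)^2 / 8 := by positivity
  have hkey : Wfun n k / ((T₁:ℝ) + 1) ≤ (v * n^2 / 3) / (3 * (n:ℝ)^2 / 8) := by
    apply div_le_div₀ (by positivity) hWub hden hceil
  have heq2 : (v * (n:ℝ)^2 / 3) / (3 * (n:ℝ)^2 / 8) = v * 8 / 9 := by
    field_simp
    ring
  rw [heq2] at hkey
  linarith [hqlow]
end
end
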